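/- arXiv:1402.3702 — 12 statements merged into one kernel-verified Lean document; each statement's English description precedes it below -/
import Mathlib

section
/- Let S = N_2 be the null semigroup of order 2, i.e. e_i e_j = e_1 for all i, j in {1,2}. A k-linear operator P on k[S] is a Rota-Baxter operator of weight zero if and only if its matrix C_P equals [[a, -a], [b, -b]] for some a, b in k (rows listed as (c_{11}, c_{12}) and (c_{21}, c_{22})). -/
/-!
For a null semigroup (all products equal to one element `z`) the product in `k[S]` is
`x * y = ε(x) ε(y) z`, where `ε` is the augmentation (sum of coefficients), and `ε` is
multiplicative. Applying `ε` to the Rota–Baxter identity at `(x, x)` gives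
`ε(Px)² = 2 ε(x) ε(Px) ε(Pz)`; at `x = z` this forces `ε(Pz)² = 0`, and then `ε(Px)² = 0` for
every `x`, so `ε ∘ P = 0` over a reduced ring. Conversely, if `ε ∘ P = 0` then `Px * Py`,
`x * Py` and `Px * y` all vanish. For `N₂`, `ε ∘ P = 0` says exactly that each row of `C_P`
sums to zero.
-/

namespace Stmt1

inductive S : Type
  | e1 | e2
  deriving DecidableEq

instance instFintypeS : Fintype S := ⟨{S.e1, S.e2}, fun x => by cases x <;> decide⟩

open S

/-- Multiplication table of the semigroup. -/
instance : Mul S := ⟨fun a b => match a, b with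
  | e1, e1 => e1
  | e1, e2 => e1
  | e2, e1 => e1
  | e2, e2 => e1⟩

instance : Semigroup S := { mul_assoc := by decide }

/-- The 2×2 matrix (rows = first index) as a function `S → S → k`. -/
def mat2 {k : Type*} (a11 a12 a21 a22 : k) : S → S → k :=
  fun i j => match i, j with
  | e1, e1 => a11 | e1, e2 => a12
  | e2, e1 => a21 | e2, e2 => a22

def IsRotaBaxterWeightZero {R A : Type*} [Semiring R] [NonUnitalNonAssocSemiring A]
    [Module R A] (P : A →ₗ[R] A) : Prop :=
  ∀ x y, P x * P y = P (x * P y) + P (P x * y)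

section Augmentation

open MonoidAlgebra

variable {k G : Type*}

noncomputable def augmentation [Semiring k] : MonoidAlgebra k G →ₗ[k] k :=
  Finsupp.linearCombination k (fun _ ↦ 1) ∘ₗ (coeffLinearEquiv k).toLinearMap

@[simp]
lemma augmentation_single [Semiring k] (g : G) (c : k) : augmentation (single g c) = c := by
  simp [augmentation]

lemma augmentation_mul [Semiring k] [Mul G] (x y : MonoidAlgebra k G) :
    augmentation (x * y) = augmentation x * augmentation y := by
  induction x using induction_linear with
  | zero => simp
  | add x x' hx hx' => simp only [add_mul, map_add, hx, hx']
  | single g c =>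
    induction y using induction_linear with
    | zero => simp
    | add y y' hy hy' => simp only [mul_add, map_add, hy, hy']
    | single h d => simp [single_mul_single]

lemma mul_eq_single_of_forall_mul_eq [Semiring k] [Mul G] {z : G} (hz : ∀ a b : G, a * b = z)
    (x y : MonoidAlgebra k G) : x * y = single z (augmentation x * augmentation y) := by
  induction x using induction_linear with
  | zero => simp
  | add x x' hx hx' => simp only [add_mul, map_add, hx, hx', single_add]
  | single g c =>
    induction y using induction_linear with
    | zero => simp
    | add y y' hy hy' => simp only [mul_add, map_add, hy, hy', single_add]
    | single h d => simp [single_mul_single, hz]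

lemma augmentation_map_mul [Semiring k] [Mul G] {z : G} (hz : ∀ a b : G, a * b = z)
    (P : MonoidAlgebra k G →ₗ[k] MonoidAlgebra k G) (x y : MonoidAlgebra k G) :
    augmentation (P (x * y)) = augmentation x * augmentation y * augmentation (P (single z 1)) := by
  rw [mul_eq_single_of_forall_mul_eq hz, ← mul_one (_ * _), ← smul_single', map_smul, map_smul,
    smul_eq_mul, mul_one]

theorem IsRotaBaxterWeightZero.augmentation_comp_eq_zero [CommRing k] [IsReduced k] [Mul G]
    {z : G} (hz : ∀ a b : G, a * b = z) {P : MonoidAlgebra k G →ₗ[k] MonoidAlgebra k G}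
    (hP : IsRotaBaxterWeightZero P) : augmentation ∘ₗ P = 0 := by
  have key : ∀ x, augmentation (P x) ^ 2 =
      2 * augmentation x * augmentation (P x) * augmentation (P (single z 1)) := by
    intro x
    have h := congrArg augmentation (hP x x)
    rw [augmentation_mul, map_add, augmentation_map_mul hz, augmentation_map_mul hz] at h
    linear_combination h
  have hz_zero : augmentation (P (single z 1)) = 0 := by
    refine IsReduced.eq_zero _ ⟨2, ?_⟩
    have h := key (single z 1)
    rw [augmentation_single] at h
    linear_combination -h
  ext g
  simpa [hz_zero] using key (single g 1)

theorem isRotaBaxterWeightZero_of_augmentation_comp_eq_zero [Semiring k] [Mul G] {z : G}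
    (hz : ∀ a b : G, a * b = z) {P : MonoidAlgebra k G →ₗ[k] MonoidAlgebra k G}
    (hP : augmentation ∘ₗ P = 0) : IsRotaBaxterWeightZero P := by
  have hP' (x : MonoidAlgebra k G) : augmentation (P x) = 0 := LinearMap.congr_fun hP x
  intro x y
  simp [mul_eq_single_of_forall_mul_eq hz, hP']

theorem isRotaBaxterWeightZero_iff_augmentation_comp_eq_zero [CommRing k] [IsReduced k] [Mul G]
    {z : G} (hz : ∀ a b : G, a * b = z) {P : MonoidAlgebra k G →ₗ[k] MonoidAlgebra k G} :
    IsRotaBaxterWeightZero P ↔ augmentation ∘ₗ P = 0 :=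
  ⟨(·.augmentation_comp_eq_zero hz), isRotaBaxterWeightZero_of_augmentation_comp_eq_zero hz⟩

theorem augmentation_comp_eq_zero_iff [Semiring k] [Fintype G]
    {P : MonoidAlgebra k G →ₗ[k] MonoidAlgebra k G} {C : G → G → k}
    (hC : ∀ i, P (single i 1) = ∑ j, single j (C i j)) :
    augmentation ∘ₗ P = 0 ↔ ∀ i, ∑ j, C i j = 0 := by
  constructor
  · intro h i
    simpa [hC] using LinearMap.congr_fun h (single i 1)
  · intro h
    ext i
    simp [hC, h i]

end Augmentation

lemma S.mul_eq_e1 : ∀ a b : S, a * b = e1 := by decide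

lemma S.sum_univ {M : Type*} [AddCommMonoid M] (f : S → M) : ∑ i, f i = f e1 + f e2 :=
  Finset.sum_pair (by decide)

lemma exists_eq_mat2_iff {k : Type*} [AddCommGroup k] {C : S → S → k} :
    (∃ a b : k, C = mat2 a (-a) b (-b)) ↔ ∀ i, ∑ j, C i j = 0 := by
  constructor
  · rintro ⟨a, b, rfl⟩ i
    cases i <;> simp [S.sum_univ, mat2]
  · intro h
    simp only [S.sum_univ, add_eq_zero_iff_eq_neg'] at h
    refine ⟨C e1 e1, C e2 e1, funext fun i ↦ funext fun j ↦ ?_⟩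
    cases i <;> cases j <;> simp [mat2, h]

theorem rbo_N2_general {k : Type*} [Field k]
    (P : MonoidAlgebra k S →ₗ[k] MonoidAlgebra k S) (C : S → S → k)
    (hC : ∀ i, P (MonoidAlgebra.single i 1) = ∑ j, MonoidAlgebra.single j (C i j)) :
    (∀ x y, P x * P y = P (x * P y) + P (P x * y)) ↔
      (∃ a b : k, C = mat2 a (-a) b (-b)) :=
  (isRotaBaxterWeightZero_iff_augmentation_comp_eq_zero S.mul_eq_e1).trans
    ((augmentation_comp_eq_zero_iff hC).trans exists_eq_mat2_iff.symm)

theorem rbo_N2 {k : Type*} [Field k] [CharZero k]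
    (P : MonoidAlgebra k S →ₗ[k] MonoidAlgebra k S) (C : S → S → k)
    (hC : ∀ i, P (MonoidAlgebra.single i 1) = ∑ j, MonoidAlgebra.single j (C i j)) :
    (∀ x y, P x * P y = P (x * P y) + P (P x * y)) ↔
      (∃ a b : k, C = mat2 a (-a) b (-b)) :=
  rbo_N2_general P C hC

end Stmt1
end

section
/- Let S = Y_2 be the semilattice of order 2, with multiplication e_1 e_1 = e_1 e_2 = e_2 e_1 = e_1 and e_2 e_2 = e_2. The only Rota-Baxter operator of weight zero on k[S] is the zero operator; that is, a k-linear operator P on k[S] is a Rota-Baxter operator of weight zero if and only if its matrix C_P is the 2x2 zero matrix. -/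
/-!
`k[Y₂]` has basis `e1, e2` where `e1` is absorbing and `e2` is the unit.
Writing `P e1 = a e1 + b e2`, the Rota–Baxter identity at `(e1, e1)` reads `P(e1)² = 2(a + b) P(e1)`, whose coordinates give
`a² = 0` and `b² + 2ab = 0`; so `P e1 = 0` in a reduced ring. Then `P(P e2) = d P(e2)` for
`P e2 = c e1 + d e2`, and the identity at `(e2, e2)` gives `c² = 0` and `d² = 0`.
-/

namespace Stmt2

inductive S : Type
  | e1 | e2
  deriving DecidableEq

instance : Fintype S := ⟨{S.e1, S.e2}, fun x => by cases x <;> simp⟩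

open S

instance : Mul S := ⟨fun a b => match a, b with
  | e1, e1 => e1
  | e1, e2 => e1
  | e2, e1 => e1
  | e2, e2 => e2⟩

instance : Semigroup S := { mul_assoc := by decide }

/-- The 2×2 matrix (rows = first index) as a function `S → S → k`. -/
def mat2 {k : Type*} (a11 a12 a21 a22 : k) : S → S → k :=
  fun i j => match i, j with
  | e1, e1 => a11 | e1, e2 => a12
  | e2, e1 => a21 | e2, e2 => a22

open MonoidAlgebra

@[simp] lemma e1_mul (s : S) : e1 * s = e1 := by cases s <;> rfl
@[simp] lemma mul_e1 (s : S) : s * e1 = e1 := by cases s <;> rfl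
@[simp] lemma e2_mul (s : S) : e2 * s = s := by cases s <;> rfl

def IsRotaBaxterOfWeightZero {k A : Type*} [CommSemiring k] [NonUnitalNonAssocSemiring A]
    [Module k A] (P : A →ₗ[k] A) : Prop :=
  ∀ x y, P x * P y = P (x * P y) + P (P x * y)

section Coordinates

variable {k : Type*} [Semiring k]

noncomputable def ofPair (a b : k) : MonoidAlgebra k S := single e1 a + single e2 b

lemma eq_ofPair_coeff (x : MonoidAlgebra k S) : x = ofPair (x.coeff e1) (x.coeff e2) := by
  ext s
  cases s <;> simp [ofPair]

lemma ofPair_inj {a b c d : k} : ofPair a b = ofPair c d ↔ a = c ∧ b = d := by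
  constructor
  · intro h
    exact ⟨by simpa [ofPair] using congr(($h).coeff e1),
      by simpa [ofPair] using congr(($h).coeff e2)⟩
  · rintro ⟨rfl, rfl⟩
    rfl

lemma ofPair_eq_zero {a b : k} : ofPair a b = 0 ↔ a = 0 ∧ b = 0 := by
  rw [← ofPair_inj, ofPair, ofPair, single_zero, single_zero, add_zero]

lemma ofPair_mul_ofPair (a b c d : k) :
    ofPair a b * ofPair c d = ofPair (a * c + a * d + b * c) (b * d) := by
  simp only [ofPair, add_mul, mul_add, single_mul_single, single_add, e1_mul, mul_e1, e2_mul]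
  abel

lemma ofPair_eq_smul_add_smul (a b : k) : ofPair a b = a • ofPair 1 0 + b • ofPair 0 1 := by
  simp [ofPair]

lemma smul_ofPair (t a b : k) : t • ofPair a b = ofPair (t * a) (t * b) := by
  simp only [ofPair, smul_add, smul_single']

lemma sum_single_eq_ofPair (f : S → k) : ∑ j, single j (f j) = ofPair (f e1) (f e2) :=
  Finset.sum_pair (by decide)

end Coordinates

lemma eq_mat2_zero_iff {k : Type*} [Zero k] (C : S → S → k) :
    C = mat2 0 0 0 0 ↔ ∀ i, C i e1 = 0 ∧ C i e2 = 0 := by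
  refine ⟨fun h i => ?_, fun h => funext fun i => funext fun j => ?_⟩
  · subst h
    cases i <;> exact ⟨rfl, rfl⟩
  · cases i <;> cases j <;> simp [mat2, h]

lemma linearMap_eq_zero_iff_apply_single {R M N : Type*} [Semiring R] [AddCommMonoid N]
    [Module R N] (f : MonoidAlgebra R M →ₗ[R] N) : f = 0 ↔ ∀ m, f (single m 1) = 0 :=
  ⟨fun h m => by rw [h, LinearMap.zero_apply], fun h => by ext m; exact h m⟩

namespace IsRotaBaxterOfWeightZero

variable {k : Type*} [CommRing k] [IsReduced k] {P : MonoidAlgebra k S →ₗ[k] MonoidAlgebra k S}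

lemma apply_ofPair_one_zero (hP : IsRotaBaxterOfWeightZero P) : P (ofPair 1 0) = 0 := by
  obtain ⟨a, b, hab⟩ : ∃ a b, P (ofPair 1 0) = ofPair a b := ⟨_, _, eq_ofPair_coeff _⟩
  have hl : ofPair 1 0 * ofPair a b = (a + b) • ofPair (1 : k) 0 := by
    rw [ofPair_mul_ofPair, smul_ofPair]; congr 1 <;> ring
  have hr : ofPair a b * ofPair 1 0 = (a + b) • ofPair (1 : k) 0 := by
    rw [ofPair_mul_ofPair, smul_ofPair]; congr 1 <;> ring
  have h := hP (ofPair 1 0) (ofPair 1 0)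
  rw [hab, hl, hr, map_smul, hab, ← add_smul, ofPair_mul_ofPair, smul_ofPair, ofPair_inj] at h
  have ha : a = 0 := IsReduced.eq_zero a ⟨2, by linear_combination -h.1⟩
  have hb : b = 0 := IsReduced.eq_zero b ⟨2, by linear_combination -h.2 - 2 * b * ha⟩
  rw [hab, ha, hb, ofPair_eq_zero]
  exact ⟨rfl, rfl⟩

lemma apply_ofPair_zero_one (hP : IsRotaBaxterOfWeightZero P) : P (ofPair 0 1) = 0 := by
  obtain ⟨c, d, hcd⟩ : ∃ c d, P (ofPair 0 1) = ofPair c d := ⟨_, _, eq_ofPair_coeff _⟩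
  have hPP : P (ofPair c d) = d • ofPair c d := by
    rw [ofPair_eq_smul_add_smul c d, map_add, map_smul, map_smul, hP.apply_ofPair_one_zero, hcd,
      smul_zero, zero_add, ← ofPair_eq_smul_add_smul]
  have h := hP (ofPair 0 1) (ofPair 0 1)
  simp only [hcd, ofPair_mul_ofPair, zero_mul, one_mul, mul_zero, mul_one, zero_add, add_zero] at h
  rw [hPP, ← add_smul, smul_ofPair, ofPair_inj] at h
  have hc : c = 0 := IsReduced.eq_zero c ⟨2, by linear_combination h.1⟩
  have hd : d = 0 := IsReduced.eq_zero d ⟨2, by linear_combination -h.2⟩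
  rw [hcd, hc, hd, ofPair_eq_zero]
  exact ⟨rfl, rfl⟩

end IsRotaBaxterOfWeightZero

lemma isRotaBaxterOfWeightZero_iff_eq_zero {k : Type*} [CommRing k] [IsReduced k]
    (P : MonoidAlgebra k S →ₗ[k] MonoidAlgebra k S) : IsRotaBaxterOfWeightZero P ↔ P = 0 := by
  refine ⟨fun hP => LinearMap.ext fun x => ?_, fun hP x y => by simp [hP]⟩
  rw [eq_ofPair_coeff x, ofPair_eq_smul_add_smul, map_add, map_smul, map_smul,
    hP.apply_ofPair_one_zero, hP.apply_ofPair_zero_one, smul_zero, smul_zero, add_zero,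
    LinearMap.zero_apply]

theorem rbo_Y2_general {k : Type*} [Field k]
    (P : MonoidAlgebra k S →ₗ[k] MonoidAlgebra k S) (C : S → S → k)
    (hC : ∀ i, P (MonoidAlgebra.single i 1) = ∑ j, MonoidAlgebra.single j (C i j)) :
    (∀ x y, P x * P y = P (x * P y) + P (P x * y)) ↔
      (C = mat2 0 0 0 0) := by
  change IsRotaBaxterOfWeightZero P ↔ _
  rw [isRotaBaxterOfWeightZero_iff_eq_zero, linearMap_eq_zero_iff_apply_single, eq_mat2_zero_iff]
  simp only [hC, sum_single_eq_ofPair, ofPair_eq_zero]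

theorem rbo_Y2 {k : Type*} [Field k] [CharZero k]
    (P : MonoidAlgebra k S →ₗ[k] MonoidAlgebra k S) (C : S → S → k)
    (hC : ∀ i, P (MonoidAlgebra.single i 1) = ∑ j, MonoidAlgebra.single j (C i j)) :
    (∀ x y, P x * P y = P (x * P y) + P (P x * y)) ↔
      (C = mat2 0 0 0 0) :=
  rbo_Y2_general P C hC

end Stmt2
end

section
/- Let S = Z_2 be the cyclic group of order 2, with multiplication e_1 e_1 = e_1, e_1 e_2 = e_2 e_1 = e_2, e_2 e_2 = e_1. The only Rota-Baxter operator of weight zero on the group algebra k[S] is the zero operator; that is, a k-linear operator P on k[S] is a Rota-Baxter operator of weight zero if and only if its matrix C_P is the 2x2 zero matrix. -/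
/-!
Write `P(e₁) = a e₁ + b e₂` and `P(e₂) = c e₁ + d e₂`. Comparing coefficients in the Rota–Baxter
identity for the pairs `(e₁, e₁)`, `(e₁, e₂)`, `(e₂, e₂)` gives `2bd = 0`, `b² + d² = 0`,
`a² = b² - 2bc` and `c² = d² - 2ad`. Hence `b⁴ = b²(b² + d²) - (bd)² = 0`, so `b = 0`, then
`d = 0`, and finally `a² = c² = 0`.
-/

namespace Stmt3

inductive S : Type
  | e1 | e2
  deriving DecidableEq

instance : Fintype S := ⟨{S.e1, S.e2}, fun x => by cases x <;> simp⟩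

open S

/-- Multiplication table of the semigroup. -/
instance : Mul S := ⟨fun a b => match a, b with
  | e1, e1 => e1
  | e1, e2 => e2
  | e2, e1 => e2
  | e2, e2 => e1⟩

instance : Semigroup S := { mul_assoc := by decide }

/-- The 2×2 matrix (rows = first index) as a function `S → S → k`. -/
def mat2 {k : Type*} (a11 a12 a21 a22 : k) : S → S → k :=
  fun i j => match i, j with
  | e1, e1 => a11 | e1, e2 => a12
  | e2, e1 => a21 | e2, e2 => a22

open MonoidAlgebra

def IsRotaBaxterOfWeightZero {R A : Type*} [CommSemiring R] [NonUnitalNonAssocSemiring A]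
    [Module R A] (P : A →ₗ[R] A) : Prop :=
  ∀ x y, P x * P y = P (x * P y) + P (P x * y)

section
variable {k : Type*} [CommRing k]

noncomputable def mk (α β : k) : MonoidAlgebra k S := single e1 α + single e2 β

lemma mk_coeff (x : MonoidAlgebra k S) : mk (x.coeff e1) (x.coeff e2) = x := by
  ext s
  cases s <;> simp [mk, coeff_add]

lemma mk_inj {α β γ δ : k} : mk α β = mk γ δ ↔ α = γ ∧ β = δ := by
  refine ⟨fun h => ⟨?_, ?_⟩, fun ⟨rfl, rfl⟩ => rfl⟩
  · simpa [mk, coeff_add, Finsupp.single_apply] using congr(($h).coeff e1)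
  · simpa [mk, coeff_add, Finsupp.single_apply] using congr(($h).coeff e2)

lemma mk_add_mk (α β γ δ : k) : mk α β + mk γ δ = mk (α + γ) (β + δ) := by
  simp only [mk, single_add]; abel

lemma smul_mk (r α β : k) : r • mk α β = mk (r * α) (r * β) := by
  simp only [mk, smul_add, smul_single']

lemma mk_mul_mk (α β γ δ : k) : mk α β * mk γ δ = mk (α * γ + β * δ) (α * δ + β * γ) := by
  simp only [mk, add_mul, mul_add, single_mul_single, single_add]
  change single e1 _ + single e2 _ + (single e2 _ + single e1 _) = _
  abel

lemma sum_single_eq_mk (f : S → k) : ∑ j, single j (f j) = mk (f e1) (f e2) :=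
  Finset.sum_pair (by decide)

lemma apply_mk_of_matrix {P : MonoidAlgebra k S →ₗ[k] MonoidAlgebra k S} {C : S → S → k}
    (hC : ∀ i, P (single i 1) = ∑ j, single j (C i j)) (α β : k) :
    P (mk α β) = mk (α * C e1 e1 + β * C e2 e1) (α * C e1 e2 + β * C e2 e2) := by
  have hsingle (i : S) (r : k) : single i r = r • single i (1 : k) := by
    rw [smul_single', mul_one]
  rw [mk, map_add, hsingle e1, hsingle e2, map_smul, map_smul, hC, hC, sum_single_eq_mk,
    sum_single_eq_mk, smul_mk, smul_mk, mk_add_mk]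

end

lemma eq_zero_of_rotaBaxter_equations {k : Type*} [CommRing k] [IsReduced k] {a b c d : k}
    (hbd : b * d = 0) (hsq : b ^ 2 + d ^ 2 = 0) (ha : a ^ 2 = b ^ 2 - 2 * b * c)
    (hc : c ^ 2 = d ^ 2 - 2 * a * d) : a = 0 ∧ b = 0 ∧ c = 0 ∧ d = 0 := by
  have hb : b = 0 := eq_zero_of_pow_eq_zero (n := 4) <| by
    linear_combination b ^ 2 * hsq - b * d * hbd
  have hd : d = 0 := eq_zero_of_pow_eq_zero (n := 2) <| by linear_combination hsq - b * hb
  refine ⟨eq_zero_of_pow_eq_zero (n := 2) ?_, hb, eq_zero_of_pow_eq_zero (n := 2) ?_, hd⟩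
  · linear_combination ha + (b - 2 * c) * hb
  · linear_combination hc + (d - 2 * a) * hd

theorem matrix_eq_zero_of_isRotaBaxterOfWeightZero {k : Type*} [CommRing k] [NoZeroDivisors k]
    (h2 : (2 : k) ≠ 0) {P : MonoidAlgebra k S →ₗ[k] MonoidAlgebra k S} {C : S → S → k}
    (hC : ∀ i, P (single i 1) = ∑ j, single j (C i j)) (hP : IsRotaBaxterOfWeightZero P) :
    C = mat2 0 0 0 0 := by
  have h11 := hP (mk 1 0) (mk 1 0)
  have h12 := hP (mk 1 0) (mk 0 1)
  have h22 := hP (mk 0 1) (mk 0 1)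
  simp only [apply_mk_of_matrix hC, mk_mul_mk, mk_add_mk, mk_inj] at h11 h12 h22
  set a := C e1 e1
  set b := C e1 e2
  set c := C e2 e1
  set d := C e2 e2
  have hbd : b * d = 0 := (mul_eq_zero.mp (by linear_combination -h11.2)).resolve_left h2
  obtain ⟨ha, hb, hc, hd⟩ := eq_zero_of_rotaBaxter_equations (a := a) (c := c) hbd
    (by linear_combination -h12.2) (by linear_combination -h11.1) (by linear_combination -h22.1)
  funext i j
  cases i <;> cases j <;> assumption

lemma eq_zero_of_matrix_eq_zero {k : Type*} [CommRing k]
    {P : MonoidAlgebra k S →ₗ[k] MonoidAlgebra k S} {C : S → S → k}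
    (hC : ∀ i, P (single i 1) = ∑ j, single j (C i j)) (h : C = mat2 0 0 0 0) : P = 0 := by
  refine LinearMap.ext fun x => ?_
  rw [← mk_coeff x, apply_mk_of_matrix hC, h]
  simp [mat2, mk]

theorem rbo_Z2 {k : Type*} [Field k] [CharZero k]
    (P : MonoidAlgebra k S →ₗ[k] MonoidAlgebra k S) (C : S → S → k)
    (hC : ∀ i, P (MonoidAlgebra.single i 1) = ∑ j, MonoidAlgebra.single j (C i j)) :
    (∀ x y, P x * P y = P (x * P y) + P (P x * y)) ↔
      (C = mat2 0 0 0 0) := by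
  refine ⟨matrix_eq_zero_of_isRotaBaxterOfWeightZero two_ne_zero hC, fun h x y => ?_⟩
  simp [eq_zero_of_matrix_eq_zero hC h]

end Stmt3
end

section
/- Let S = L_2 be the left zero semigroup of order 2, i.e. e_i e_j = e_i for all i, j in {1,2}. A k-linear operator P on k[S] is a Rota-Baxter operator of weight zero if and only if its matrix C_P is either of the form [[a, -a^2/b], [b, -a]] for some a, b in k with b nonzero, or of the form [[0, a], [0, 0]] for some a in k (rows listed as (c_{11}, c_{12}) and (c_{21}, c_{22})). -/
/-!
In `k[L₂]` every product is `x * y = ε(y) • x`, where `ε` is the augmentation (the counit, summing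
the coefficients). The weight-zero Rota-Baxter identity therefore collapses to `ε(y) • P (P x) = 0`,
i.e. to `P ∘ P = 0`, i.e. to `C_P ^ 2 = 0`. A `2 × 2` matrix `[[a, b], [c, d]]` squares to zero
iff `d = -a` and `a ^ 2 + b c = 0`; the two families correspond to `c ≠ 0` and `c = 0`.
-/

namespace Stmt4

inductive S : Type
  | e1 | e2
  deriving DecidableEq

instance : Fintype S := ⟨{S.e1, S.e2}, fun x => by cases x <;> simp⟩

open S

/-- Multiplication table of the semigroup. -/
instance : Mul S := ⟨fun a b => match a, b with
  | e1, e1 => e1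
  | e1, e2 => e1
  | e2, e1 => e2
  | e2, e2 => e2⟩

instance : Semigroup S := { mul_assoc := by decide }

/-- The 2×2 matrix (rows = first index) as a function `S → S → k`. -/
def mat2 {k : Type*} (a11 a12 a21 a22 : k) : S → S → k :=
  fun i j => match i, j with
  | e1, e1 => a11 | e1, e2 => a12
  | e2, e1 => a21 | e2, e2 => a22

open MonoidAlgebra

def IsRotaBaxterOfWeightZero {R A : Type*} [CommSemiring R] [NonUnitalNonAssocSemiring A]
    [Module R A] (P : A →ₗ[R] A) : Prop :=
  ∀ x y, P x * P y = P (x * P y) + P (P x * y)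

section LeftZero

variable {k M : Type*} [CommRing k] [Mul M]

theorem mul_eq_counit_smul_of_forall_mul_eq_left (h : ∀ a b : M, a * b = a)
    (x y : MonoidAlgebra k M) : x * y = Coalgebra.counit (R := k) y • x := by
  induction y using MonoidAlgebra.induction_linear with
  | zero => simp
  | add y₁ y₂ h₁ h₂ => rw [mul_add, h₁, h₂, map_add, add_smul]
  | single m a =>
    induction x using MonoidAlgebra.induction_linear with
    | zero => simp
    | add x₁ x₂ h₁ h₂ => rw [add_mul, h₁, h₂, smul_add]
    | single n b => simp [h, mul_comm]

theorem isRotaBaxterOfWeightZero_iff_comp_self_eq_zero [Nonempty M] (h : ∀ a b : M, a * b = a)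
    (P : MonoidAlgebra k M →ₗ[k] MonoidAlgebra k M) :
    IsRotaBaxterOfWeightZero P ↔ P ∘ₗ P = 0 := by
  have identity (x y : MonoidAlgebra k M) :
      P (x * P y) + P (P x * y) = P x * P y + Coalgebra.counit (R := k) y • P (P x) := by
    simp only [mul_eq_counit_smul_of_forall_mul_eq_left h, map_smul]
  constructor
  · intro hP
    refine LinearMap.ext fun x => ?_
    obtain ⟨m⟩ := ‹Nonempty M›
    have := hP x (single m 1)
    rw [identity, left_eq_add, counit_single] at this
    simpa using this
  · intro hP x y
    rw [identity, show P (P x) = 0 from LinearMap.congr_fun hP x, smul_zero, add_zero]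

end LeftZero

section Matrix

variable {k M : Type*} [CommRing k] [Fintype M] [DecidableEq M]
  (P : MonoidAlgebra k M →ₗ[k] MonoidAlgebra k M) (C : M → M → k)

theorem toMatrix_basis_eq_transpose (hC : ∀ i, P (single i 1) = ∑ j, single j (C i j)) :
    LinearMap.toMatrix (basis M k) (basis M k) P = (Matrix.of C).transpose := by
  ext i j
  simp [LinearMap.toMatrix_apply, hC, basis, Finsupp.single_apply]

theorem comp_self_eq_zero_iff_mul_self_eq_zero
    (hC : ∀ i, P (single i 1) = ∑ j, single j (C i j)) :
    P ∘ₗ P = 0 ↔ Matrix.of C * Matrix.of C = 0 := by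
  rw [← (LinearMap.toMatrix (basis M k) (basis M k)).injective.eq_iff,
    LinearMap.toMatrix_comp _ (basis M k), toMatrix_basis_eq_transpose P C hC, map_zero,
    ← Matrix.transpose_mul, Matrix.transpose_eq_zero]

end Matrix

theorem S.mul_eq_left (i j : S) : i * j = i := by
  cases i <;> cases j <;> rfl

theorem S.univ_eq : (Finset.univ : Finset S) = {e1, e2} := rfl

instance : Nonempty S := ⟨e1⟩

section Mat2

variable {k : Type*}

theorem mat2_eta (C : S → S → k) : C = mat2 (C e1 e1) (C e1 e2) (C e2 e1) (C e2 e2) := by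
  funext i j
  cases i <;> cases j <;> rfl

theorem mat2_eq_mat2_iff {a b c d a' b' c' d' : k} :
    mat2 a b c d = mat2 a' b' c' d' ↔ a = a' ∧ b = b' ∧ c = c' ∧ d = d' := by
  refine ⟨fun h => ⟨congrFun₂ h e1 e1, congrFun₂ h e1 e2, congrFun₂ h e2 e1, congrFun₂ h e2 e2⟩, ?_⟩
  rintro ⟨rfl, rfl, rfl, rfl⟩
  rfl

theorem of_mat2_eq_zero_iff [Zero k] {a b c d : k} :
    Matrix.of (mat2 a b c d) = 0 ↔ a = 0 ∧ b = 0 ∧ c = 0 ∧ d = 0 := by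
  rw [← Matrix.of_zero, Matrix.of.injective.eq_iff, mat2_eta 0]
  exact mat2_eq_mat2_iff

theorem of_mat2_mul_of_mat2 [NonUnitalNonAssocSemiring k] (a b c d a' b' c' d' : k) :
    Matrix.of (mat2 a b c d) * Matrix.of (mat2 a' b' c' d') =
      Matrix.of (mat2 (a * a' + b * c') (a * b' + b * d') (c * a' + d * c') (c * b' + d * d')) := by
  ext i j
  cases i <;> cases j <;> simp [Matrix.mul_apply, S.univ_eq, mat2]

theorem of_mat2_mul_self_eq_zero_iff [Field k] (a b c d : k) :
    Matrix.of (mat2 a b c d) * Matrix.of (mat2 a b c d) = 0 ↔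
      (c ≠ 0 ∧ b = -(a ^ 2) / c ∧ d = -a) ∨ (a = 0 ∧ c = 0 ∧ d = 0) := by
  rw [of_mat2_mul_of_mat2, of_mat2_eq_zero_iff]
  constructor
  · rintro ⟨h11, h12, h21, h22⟩
    by_cases hc : c = 0
    · subst hc
      refine .inr ⟨?_, rfl, ?_⟩
      · exact mul_self_eq_zero.mp (by linear_combination h11)
      · exact mul_self_eq_zero.mp (by linear_combination h22)
    · have hd : d = -a := by
        have : c * (a + d) = 0 := by linear_combination h21
        linear_combination (mul_eq_zero.mp this).resolve_left hc
      refine .inl ⟨hc, ?_, hd⟩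
      field_simp
      linear_combination h11
  · rintro (⟨hc, rfl, rfl⟩ | ⟨rfl, rfl, rfl⟩)
    · refine ⟨?_, ?_, ?_, ?_⟩ <;> field_simp <;> ring
    · simp

theorem of_mul_self_eq_zero_iff [Field k] (C : S → S → k) :
    Matrix.of C * Matrix.of C = 0 ↔
      (∃ a b : k, b ≠ 0 ∧ C = mat2 a (-(a ^ 2) / b) b (-a)) ∨ ∃ a : k, C = mat2 0 a 0 0 := by
  rw [mat2_eta C, of_mat2_mul_self_eq_zero_iff]
  simp [mat2_eq_mat2_iff]

end Mat2

theorem rbo_L2_general {k : Type*} [Field k]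
    (P : MonoidAlgebra k S →ₗ[k] MonoidAlgebra k S) (C : S → S → k)
    (hC : ∀ i, P (MonoidAlgebra.single i 1) = ∑ j, MonoidAlgebra.single j (C i j)) :
    (∀ x y, P x * P y = P (x * P y) + P (P x * y)) ↔
      ((∃ a b : k, b ≠ 0 ∧ C = mat2 a (-(a ^ 2) / b) b (-a)) ∨ (∃ a : k, C = mat2 0 a 0 0)) := by
  rw [← of_mul_self_eq_zero_iff, ← comp_self_eq_zero_iff_mul_self_eq_zero P C hC,
    ← isRotaBaxterOfWeightZero_iff_comp_self_eq_zero S.mul_eq_left]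
  rfl

theorem rbo_L2 {k : Type*} [Field k] [CharZero k]
    (P : MonoidAlgebra k S →ₗ[k] MonoidAlgebra k S) (C : S → S → k)
    (hC : ∀ i, P (MonoidAlgebra.single i 1) = ∑ j, MonoidAlgebra.single j (C i j)) :
    (∀ x y, P x * P y = P (x * P y) + P (P x * y)) ↔
      ((∃ a b : k, b ≠ 0 ∧ C = mat2 a (-(a ^ 2) / b) b (-a)) ∨ (∃ a : k, C = mat2 0 a 0 0)) :=
  rbo_L2_general P C hC

end Stmt4
end

section
/- Let S = CS(1) be the null semigroup of order 3, i.e. e_i e_j = e_1 for all i, j in {1,2,3}. A k-linear operator P on k[S] is a Rota-Baxter operator of weight zero if and only if its matrix C_P equals [[a, b, -a-b], [c, d, -c-d], [e, f, -e-f]] for some a, b, c, d, e, f in k; equivalently, if and only if each row of C_P sums to zero. -/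
/-!
In the algebra of a null semigroup with zero `z`, every product is `x * y = ε(x) ε(y) z`, where
`ε` is the augmentation. Applying `ε` to the Rota–Baxter identity at `(x, x)` gives
`ε(Px)² = 2 ε(x) ε(Px) λ` with `λ = ε(P z)`; at `x = z` this reads `λ² = 2λ²`, so `λ = 0`
and then `ε(Px) = 0` for all `x`. Conversely, if `ε ∘ P = 0` all three products in the
identity vanish. For the matrix `C_P`, `ε(P e_i)` is the `i`-th row sum.
-/

namespace Stmt5

inductive S : Type
  | e1 | e2 | e3
  deriving DecidableEq

open S

instance instFintypeS : Fintype S :=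
  ⟨{e1, e2, e3}, by intro x; cases x <;> decide⟩

/-- Multiplication table of the semigroup. -/
instance : Mul S := ⟨fun a b => match a, b with
  | e1, e1 => e1
  | e1, e2 => e1
  | e1, e3 => e1
  | e2, e1 => e1
  | e2, e2 => e1
  | e2, e3 => e1
  | e3, e1 => e1
  | e3, e2 => e1
  | e3, e3 => e1⟩

instance : Semigroup S := { mul_assoc := by decide }

/-- The 3×3 matrix (rows = first index) as a function `S → S → k`. -/
def mat3 {k : Type*} (a11 a12 a13 a21 a22 a23 a31 a32 a33 : k) : S → S → k :=
  fun i j => match i, j with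
  | e1, e1 => a11 | e1, e2 => a12 | e1, e3 => a13
  | e2, e1 => a21 | e2, e2 => a22 | e2, e3 => a23
  | e3, e1 => a31 | e3, e2 => a32 | e3, e3 => a33

section NullSemigroupAlgebra

open MonoidAlgebra

variable {R G : Type*}

/-- The augmentation `∑ g, r_g • g ↦ ∑ g, r_g`. -/
noncomputable def augmentation [CommSemiring R] : MonoidAlgebra R G →ₗ[R] R :=
  Finsupp.linearCombination R (fun _ ↦ 1) ∘ₗ (coeffLinearEquiv R).toLinearMap

@[simp]
lemma augmentation_single [CommSemiring R] (g : G) (r : R) :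
    augmentation (single g r) = r := by
  simp [augmentation]

def IsRotaBaxterOfWeightZero {A : Type*} [CommSemiring R] [NonUnitalNonAssocSemiring A]
    [Module R A] (P : A →ₗ[R] A) : Prop :=
  ∀ x y, P x * P y = P (x * P y) + P (P x * y)

section Null

variable [Mul G] {z : G}

lemma mul_eq_single_augmentation_mul [CommSemiring R] (hz : ∀ a b : G, a * b = z)
    (x y : MonoidAlgebra R G) : x * y = single z (augmentation x * augmentation y) := by
  induction x using induction_linear with
  | zero => simp
  | add x₁ x₂ h₁ h₂ => rw [add_mul, h₁, h₂, map_add, add_mul, single_add]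
  | single g r =>
    induction y using induction_linear with
    | zero => simp
    | add y₁ y₂ h₁ h₂ => rw [mul_add, h₁, h₂, map_add, mul_add, single_add]
    | single h s => simp [single_mul_single, hz]

lemma IsRotaBaxterOfWeightZero.augmentation_mul_self [CommSemiring R]
    (hz : ∀ a b : G, a * b = z) {P : MonoidAlgebra R G →ₗ[R] MonoidAlgebra R G}
    (hP : IsRotaBaxterOfWeightZero P) (x : MonoidAlgebra R G) :
    augmentation (P x) * augmentation (P x) =
      2 * augmentation x * augmentation (P x) * augmentation (P (single z 1)) := by
  have hPz (c : R) : augmentation (P (single z c)) = c * augmentation (P (single z 1)) := by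
    rw [show single z c = c • single z (1 : R) by simp [smul_single], map_smul, map_smul,
      smul_eq_mul]
  have h := congrArg augmentation (hP x x)
  rw [mul_eq_single_augmentation_mul hz, mul_eq_single_augmentation_mul hz,
    mul_eq_single_augmentation_mul hz, augmentation_single, map_add,
    hPz (augmentation x * _), hPz (augmentation (P x) * _)] at h
  rw [h]
  ring

lemma isRotaBaxterOfWeightZero_iff_augmentation_comp_eq_zero [CommRing R] [IsReduced R]
    (hz : ∀ a b : G, a * b = z) (P : MonoidAlgebra R G →ₗ[R] MonoidAlgebra R G) :
    IsRotaBaxterOfWeightZero P ↔ augmentation ∘ₗ P = 0 := by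
  constructor
  · intro hP
    have hPz : augmentation (P (single z (1 : R))) = 0 := by
      have h := hP.augmentation_mul_self hz (single z 1)
      rw [augmentation_single] at h
      exact IsReduced.eq_zero _ ⟨2, by linear_combination -h⟩
    refine LinearMap.ext fun x ↦ ?_
    have h := hP.augmentation_mul_self hz x
    rw [hPz, mul_zero] at h
    exact IsReduced.eq_zero _ ⟨2, (sq _).trans h⟩
  · intro hP x y
    have hPx (x) : augmentation (P x) = 0 := LinearMap.congr_fun hP x
    simp [mul_eq_single_augmentation_mul hz, hPx]

end Null

lemma augmentation_comp_eq_zero_iff [CommSemiring R]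
    (P : MonoidAlgebra R G →ₗ[R] MonoidAlgebra R G) :
    augmentation ∘ₗ P = 0 ↔ ∀ g, augmentation (P (single g 1)) = 0 := by
  constructor
  · intro hP g
    exact LinearMap.congr_fun hP _
  · intro hP
    ext g
    simpa using hP g

end NullSemigroupAlgebra

lemma mul_eq_e1 (a b : S) : a * b = e1 := by
  cases a <;> cases b <;> rfl

lemma sum_univ_S {M : Type*} [AddCommMonoid M] (f : S → M) : ∑ i, f i = f e1 + f e2 + f e3 := by
  rw [show (Finset.univ : Finset S) = {e1, e2, e3} from rfl]
  simp [add_assoc]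

lemma exists_eq_mat3_iff_sum_eq_zero {k : Type*} [AddCommGroup k] (C : S → S → k) :
    (∃ a b c d e f : k, C = mat3 a b (-a - b) c d (-c - d) e f (-e - f)) ↔
      ∀ i, ∑ j, C i j = 0 := by
  constructor
  · rintro ⟨a, b, c, d, e, f, rfl⟩ i
    cases i <;> simp [sum_univ_S, mat3]
  · intro h
    refine ⟨C e1 e1, C e1 e2, C e2 e1, C e2 e2, C e3 e1, C e3 e2, ?_⟩
    funext i j
    have hi := h i
    rw [sum_univ_S] at hi
    cases i <;> cases j <;> simp only [mat3] <;>
      first | rfl | (rw [← sub_eq_zero, ← hi]; abel)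

theorem rbo_CS1_general {k : Type*} [Field k]
    (P : MonoidAlgebra k S →ₗ[k] MonoidAlgebra k S) (C : S → S → k)
    (hC : ∀ i, P (MonoidAlgebra.single i 1) = ∑ j, MonoidAlgebra.single j (C i j)) :
    (∀ x y, P x * P y = P (x * P y) + P (P x * y)) ↔
      (∃ a b c d e f : k, C = mat3 a b (-a - b) c d (-c - d) e f (-e - f)) := by
  have hrow (i : S) : augmentation (P (MonoidAlgebra.single i 1)) = ∑ j, C i j := by
    simp [hC]
  rw [exists_eq_mat3_iff_sum_eq_zero]
  simp_rw [← hrow, ← augmentation_comp_eq_zero_iff]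
  exact isRotaBaxterOfWeightZero_iff_augmentation_comp_eq_zero mul_eq_e1 P

theorem rbo_CS1 {k : Type*} [Field k] [CharZero k]
    (P : MonoidAlgebra k S →ₗ[k] MonoidAlgebra k S) (C : S → S → k)
    (hC : ∀ i, P (MonoidAlgebra.single i 1) = ∑ j, MonoidAlgebra.single j (C i j)) :
    (∀ x y, P x * P y = P (x * P y) + P (P x * y)) ↔
      (∃ a b c d e f : k, C = mat3 a b (-a - b) c d (-c - d) e f (-e - f)) :=
  rbo_CS1_general P C hC

end Stmt5
end

section
/- Let S = CS(2) be the commutative semigroup of order 3 in which e_i e_j = e_1 for all (i,j) except e_3 e_3 = e_2. A k-linear operator P on k[S] is a Rota-Baxter operator of weight zero if and only if its matrix C_P is either of the form [[a, -a, 0], [b, -b, 0], [c, -c, 0]] for some a, b, c in k, or of the form [[a, -a, 0], [b, -b, 0], [c, 2(b-a)-c, 2(a-b)]] for some a, b, c in k with a not equal to b. -/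
/-!
By bilinearity the Rota-Baxter identity need only hold on pairs of basis elements, and comparing
coefficients turns it into polynomial equations in the entries of `C`. In `CS(2)` every product is
`e1` except `e3 * e3 = e2`, so these equations are short: writing `sᵢ` for the row sums of `C` and
`tᵢ = C eᵢ e3`, they give `t₁³ = 0`, then `s₁² = 0`, `t₂² = 0`, `s₂² = 0`, `s₃² = 0`, and finally
`t₃ (t₃ - 2 (C e1 e1 - C e2 e1)) = 0`; conversely every such matrix satisfies all 27 equations.
-/

/- Statement 6: RBOs of weight zero on the semigroup algebra of CS(2). -/

namespace Stmt6

inductive S : Type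
  | e1 | e2 | e3
  deriving DecidableEq

open S

instance : Fintype S := ⟨{e1, e2, e3}, fun x => by cases x <;> simp⟩

/-- Multiplication table of the semigroup. -/
instance : Mul S := ⟨fun a b => match a, b with
  | e1, e1 => e1
  | e1, e2 => e1
  | e1, e3 => e1
  | e2, e1 => e1
  | e2, e2 => e1
  | e2, e3 => e1
  | e3, e1 => e1
  | e3, e2 => e1
  | e3, e3 => e2⟩

instance : Semigroup S := { mul_assoc := by decide }

/-- The 3×3 matrix (rows = first index) as a function `S → S → k`. -/
def mat3 {k : Type*} (a11 a12 a13 a21 a22 a23 a31 a32 a33 : k) : S → S → k :=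
  fun i j => match i, j with
  | e1, e1 => a11 | e1, e2 => a12 | e1, e3 => a13
  | e2, e1 => a21 | e2, e2 => a22 | e2, e3 => a23
  | e3, e1 => a31 | e3, e2 => a32 | e3, e3 => a33

end Stmt6

namespace MonoidAlgebra

variable {k G : Type*} [CommSemiring k]

theorem rotaBaxter_iff_single [Mul G] (P : MonoidAlgebra k G →ₗ[k] MonoidAlgebra k G) :
    (∀ x y, P x * P y = P (x * P y) + P (P x * y)) ↔
      ∀ i j : G, P (single i 1) * P (single j 1) =
        P (single i 1 * P (single j 1)) + P (P (single i 1) * single j 1) := by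
  refine ⟨fun h i j => h _ _, fun h x y => ?_⟩
  let mul := LinearMap.mul k (MonoidAlgebra k G)
  have key : mul.compl₁₂ P P =
      (mul.compl₁₂ LinearMap.id P).compr₂ P + (mul.compl₁₂ P LinearMap.id).compr₂ P :=
    LinearMap.ext_basis (basis G k) (basis G k) fun i j => by simpa [mul] using h i j
  simpa [mul] using congr($key x y)

variable [Fintype G]

theorem apply_single_of_matrix {P : MonoidAlgebra k G →ₗ[k] MonoidAlgebra k G} {C : G → G → k}
    (hC : ∀ i, P (single i 1) = ∑ j, single j (C i j)) (g : G) (r : k) :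
    P (single g r) = ∑ l, single l (r * C g l) := by
  rw [← mul_one r, ← smul_single', map_smul, hC, Finset.smul_sum]
  simp

variable [Mul G] [DecidableEq G]

/-- The structure equations of a weight-zero Rota-Baxter operator with matrix `C`: the
coefficient of `l` in `P(i) P(j) = P(i P(j)) + P(P(i) j)`. -/
def IsRotaBaxterMatrix (C : G → G → k) : Prop :=
  ∀ i j l : G, ∑ m, ∑ n, (if m * n = l then C i m * C j n else 0) =
    ∑ m, C j m * C (i * m) l + ∑ m, C i m * C (m * j) l

theorem rotaBaxter_iff_isRotaBaxterMatrix {P : MonoidAlgebra k G →ₗ[k] MonoidAlgebra k G}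
    {C : G → G → k} (hC : ∀ i, P (single i 1) = ∑ j, single j (C i j)) :
    (∀ x y, P x * P y = P (x * P y) + P (P x * y)) ↔ IsRotaBaxterMatrix C := by
  rw [rotaBaxter_iff_single]
  refine forall₂_congr fun i j => ?_
  have lhs (l : G) : (P (single i 1) * P (single j 1)).coeff l =
      ∑ m, ∑ n, if m * n = l then C i m * C j n else 0 := by
    simp only [hC, Finset.sum_mul_sum, single_mul_single, coeff_sum, coeff_single,
      Finsupp.finsetSum_apply, Finsupp.single_apply]
  have rhs₁ (l : G) : (P (single i 1 * P (single j 1))).coeff l = ∑ m, C j m * C (i * m) l := by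
    simp only [hC, Finset.mul_sum, single_mul_single, one_mul, map_sum,
      apply_single_of_matrix hC, coeff_sum, coeff_single, Finsupp.finsetSum_apply,
      Finsupp.single_apply, Finset.sum_ite_eq', Finset.mem_univ, if_true]
  have rhs₂ (l : G) : (P (P (single i 1) * single j 1)).coeff l = ∑ m, C i m * C (m * j) l := by
    simp only [hC, Finset.sum_mul, single_mul_single, mul_one, map_sum,
      apply_single_of_matrix hC, coeff_sum, coeff_single, Finsupp.finsetSum_apply,
      Finsupp.single_apply, Finset.sum_ite_eq', Finset.mem_univ, if_true]
  rw [← coeff_inj, Finsupp.ext_iff]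
  simp only [coeff_add, Finsupp.add_apply, lhs, rhs₁, rhs₂]

end MonoidAlgebra

namespace Stmt6

open S

theorem S.mul_def (a b : S) : a * b = if a = e3 ∧ b = e3 then e2 else e1 := by
  cases a <;> cases b <;> rfl

theorem S.sum_univ {M : Type*} [AddCommMonoid M] (f : S → M) :
    ∑ s, f s = f e1 + f e2 + f e3 := by
  rw [add_assoc, ← add_zero (f e3)]
  rfl

theorem eq_mat3 {k : Type*} (C : S → S → k) :
    C = mat3 (C e1 e1) (C e1 e2) (C e1 e3) (C e2 e1) (C e2 e2) (C e2 e3)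
      (C e3 e1) (C e3 e2) (C e3 e3) := by
  funext i j
  cases i <;> cases j <;> rfl

theorem isRotaBaxterMatrix_iff {k : Type*} [CommRing k] [NoZeroDivisors k] (C : S → S → k) :
    MonoidAlgebra.IsRotaBaxterMatrix C ↔ ∃ a b c t : k,
      t * (t - 2 * (a - b)) = 0 ∧ C = mat3 a (-a) 0 b (-b) 0 c (-c - t) t := by
  constructor
  · intro h
    obtain ⟨a₁, a₂, a₃, b₁, b₂, b₃, c₁, c₂, c₃, rfl⟩ :
        ∃ a₁ a₂ a₃ b₁ b₂ b₃ c₁ c₂ c₃, C = mat3 a₁ a₂ a₃ b₁ b₂ b₃ c₁ c₂ c₃ :=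
      ⟨_, _, _, _, _, _, _, _, _, eq_mat3 C⟩
    have E113 := h e1 e1 e3
    have E112 := h e1 e1 e2
    have E111 := h e1 e1 e1
    have E323 := h e3 e2 e3
    have E221 := h e2 e2 e1
    have E121 := h e1 e2 e1
    have E331 := h e3 e3 e1
    have E332 := h e3 e3 e2
    simp only [S.sum_univ, S.mul_def, mat3, reduceCtorEq, and_self, and_false, false_and,
      if_true, if_false, add_zero, zero_add] at E113 E112 E111 E323 E221 E121 E331 E332
    obtain rfl : a₃ = 0 :=
      (pow_eq_zero_iff three_ne_zero).mp (by linear_combination a₃ * E112 - a₂ * E113)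
    obtain rfl : a₂ = -a₁ := eq_neg_of_add_eq_zero_right <|
      (pow_eq_zero_iff two_ne_zero).mp (by linear_combination -E111 - E112)
    obtain rfl : b₃ = 0 := (pow_eq_zero_iff two_ne_zero).mp (by linear_combination -E323)
    obtain rfl : b₂ = -b₁ := eq_neg_of_add_eq_zero_right <|
      (pow_eq_zero_iff two_ne_zero).mp (by linear_combination E221 - 2 * E121)
    obtain rfl : c₂ = -c₁ - c₃ := by
      have hs₃ : (c₁ + c₂ + c₃) ^ 2 = 0 := by linear_combination E331 + E332
      linear_combination (pow_eq_zero_iff two_ne_zero).mp hs₃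
    exact ⟨a₁, b₁, c₁, c₃, by linear_combination E332, rfl⟩
  · rintro ⟨a, b, c, t, ht, rfl⟩ i j l
    cases i <;> cases j <;> cases l <;>
      simp only [S.sum_univ, S.mul_def, mat3, reduceCtorEq, and_self, and_false, false_and,
        if_true, if_false, add_zero, zero_add] <;>
      first | ring1 | linear_combination ht | linear_combination -ht

theorem rbo_CS2_general {k : Type*} [Field k]
    (P : MonoidAlgebra k S →ₗ[k] MonoidAlgebra k S) (C : S → S → k)
    (hC : ∀ i, P (MonoidAlgebra.single i 1) = ∑ j, MonoidAlgebra.single j (C i j)) :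
    (∀ x y, P x * P y = P (x * P y) + P (P x * y)) ↔
      ((∃ a b c : k, C = mat3 a (-a) 0 b (-b) 0 c (-c) 0) ∨ (∃ a b c : k, a ≠ b ∧ C = mat3 a (-a) 0 b (-b) 0 c (2 * (b - a) - c) (2 * (a - b)))) := by
  rw [MonoidAlgebra.rotaBaxter_iff_isRotaBaxterMatrix hC, isRotaBaxterMatrix_iff]
  have h₃₂ (a b c : k) : -c - 2 * (a - b) = 2 * (b - a) - c := by ring
  constructor
  · rintro ⟨a, b, c, t, ht, rfl⟩
    rcases eq_or_ne t 0 with rfl | ht₀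
    · exact Or.inl ⟨a, b, c, by rw [sub_zero]⟩
    · obtain rfl : t = 2 * (a - b) := sub_eq_zero.mp ((mul_eq_zero.mp ht).resolve_left ht₀)
      exact Or.inr ⟨a, b, c, fun hab => ht₀ (by rw [hab, sub_self, mul_zero]), by rw [h₃₂]⟩
  · rintro (⟨a, b, c, rfl⟩ | ⟨a, b, c, -, rfl⟩)
    · exact ⟨a, b, c, 0, by ring, by rw [sub_zero]⟩
    · exact ⟨a, b, c, 2 * (a - b), by ring, by rw [h₃₂]⟩

theorem rbo_CS2 {k : Type*} [Field k] [CharZero k]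
    (P : MonoidAlgebra k S →ₗ[k] MonoidAlgebra k S) (C : S → S → k)
    (hC : ∀ i, P (MonoidAlgebra.single i 1) = ∑ j, MonoidAlgebra.single j (C i j)) :
    (∀ x y, P x * P y = P (x * P y) + P (P x * y)) ↔
      ((∃ a b c : k, C = mat3 a (-a) 0 b (-b) 0 c (-c) 0) ∨ (∃ a b c : k, a ≠ b ∧ C = mat3 a (-a) 0 b (-b) 0 c (2 * (b - a) - c) (2 * (a - b)))) :=
  rbo_CS2_general P C hC

end Stmt6
end

section
/- Let S = CS(3) be the commutative semigroup of order 3 in which e_2 e_2 = e_2 and all other products e_i e_j equal e_1. A k-linear operator P on k[S] is a Rota-Baxter operator of weight zero if and only if its matrix C_P equals [[a, 0, -a], [b, 0, -b], [c, 0, -c]] for some a, b, c in k. -/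
/- Statement 7: RBOs of weight zero on the semigroup algebra of CS(3). -/

namespace Stmt7

inductive S : Type
  | e1 | e2 | e3
  deriving DecidableEq

open S

instance : Fintype S := ⟨{e1, e2, e3}, fun x => by cases x <;> simp⟩

/-- Multiplication table of the semigroup. -/
instance : Mul S := ⟨fun a b => match a, b with
  | e1, e1 => e1
  | e1, e2 => e1
  | e1, e3 => e1
  | e2, e1 => e1
  | e2, e2 => e2
  | e2, e3 => e1
  | e3, e1 => e1
  | e3, e2 => e1
  | e3, e3 => e1⟩

instance : Semigroup S := { mul_assoc := by decide }

/-- The 3×3 matrix (rows = first index) as a function `S → S → k`. -/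
def mat3 {k : Type*} (a11 a12 a13 a21 a22 a23 a31 a32 a33 : k) : S → S → k :=
  fun i j => match i, j with
  | e1, e1 => a11 | e1, e2 => a12 | e1, e3 => a13
  | e2, e1 => a21 | e2, e2 => a22 | e2, e3 => a23
  | e3, e1 => a31 | e3, e2 => a32 | e3, e3 => a33

/-! The semigroup homomorphisms `S → (k, ·)` given by `s ↦ 1` and by the indicator of `e2` extend
to characters `ε` (`augmentation`) and `χ` (`e2Coeff`) of `k[S]`, and every product in `k[S]` is
determined by them: `x * y = χ x χ y • e2 + (ε x ε y - χ x χ y) • e1`. So `z` annihilates `k[S]` as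
soon as `ε z = χ z = 0`, and an operator with values in that subspace kills every term of the
Rota–Baxter identity. Conversely, applying `ε` and `χ` to the identity at `x = y = e_i` gives
equations `a ^ 2 = 2 * a * b`; taking `i = e1, e3, e2` in turn, `b` is already known to vanish, so
`ε` and `χ` vanish on every `P e_i`. In matrix terms: zero middle column and zero row sums. -/

open MonoidAlgebra

lemma mul_eq_ite (s t : S) : s * t = if s = e2 ∧ t = e2 then e2 else e1 := by
  cases s <;> cases t <;> rfl

lemma sum_univ_S {M : Type*} [AddCommMonoid M] (f : S → M) : ∑ s, f s = f e1 + f e2 + f e3 := by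
  rw [show (Finset.univ : Finset S) = {e1, e2, e3} from rfl, Finset.sum_insert (by decide),
    Finset.sum_insert (by decide), Finset.sum_singleton, add_assoc]

lemma exists_eq_mat3_iff {M : Type*} [AddCommGroup M] (C : S → S → M) :
    (∃ a b c : M, C = mat3 a 0 (-a) b 0 (-b) c 0 (-c)) ↔
      ∀ s, C s e1 + C s e2 + C s e3 = 0 ∧ C s e2 = 0 := by
  constructor
  · rintro ⟨a, b, c, rfl⟩ s
    cases s <;> simp [mat3]
  · intro h
    refine ⟨C e1 e1, C e2 e1, C e3 e1, funext fun s => funext fun t => ?_⟩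
    obtain ⟨hsum, h2⟩ := h s
    rw [h2, add_zero] at hsum
    cases s <;> cases t <;> simp [mat3, h2, eq_neg_of_add_eq_zero_right hsum]

section

variable {k : Type*} [CommRing k]

def e2Indicator : S →ₙ* k where
  toFun s := if s = e2 then 1 else 0
  map_mul' s t := by
    rw [ite_zero_mul_ite_zero, mul_one, mul_eq_ite]
    split_ifs <;> simp_all

noncomputable def augmentation : k[S] →ₙₐ[k] k := liftMagma k 1

noncomputable def e2Coeff : k[S] →ₙₐ[k] k := liftMagma k e2Indicator

lemma liftMagma_single (f : S →ₙ* k) (s : S) (r : k) : liftMagma k f (single s r) = r * f s := by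
  simp

@[simp] lemma augmentation_single (s : S) (r : k) : augmentation (single s r) = r :=
  (liftMagma_single 1 s r).trans (mul_one r)

@[simp] lemma e2Coeff_single (s : S) (r : k) :
    e2Coeff (single s r) = if s = e2 then r else 0 := by
  rw [e2Coeff, liftMagma_single]
  simp [e2Indicator]

lemma mul_eq_smul_add_smul (x y : k[S]) :
    x * y = (e2Coeff x * e2Coeff y) • single e2 1 +
      (augmentation x * augmentation y - e2Coeff x * e2Coeff y) • single e1 1 := by
  induction x using MonoidAlgebra.induction_linear with
  | zero => simp
  | add x x' hx hx' => rw [add_mul, hx, hx', map_add, map_add]; module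
  | single s r =>
    induction y using MonoidAlgebra.induction_linear with
    | zero => simp
    | add y y' hy hy' => rw [mul_add, hy, hy', map_add, map_add]; module
    | single t q =>
      rw [single_mul_single, mul_eq_ite]
      simp only [augmentation_single, e2Coeff_single, ite_zero_mul_ite_zero]
      split_ifs <;> simp

lemma mul_comm' (x y : k[S]) : x * y = y * x := by
  rw [mul_eq_smul_add_smul x, mul_eq_smul_add_smul y, mul_comm (e2Coeff y),
    mul_comm (augmentation y)]

lemma mul_eq_zero_of_augmentation_of_e2Coeff {z : k[S]} (hε : augmentation z = 0)
    (hχ : e2Coeff z = 0) (w : k[S]) : z * w = 0 := by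
  simp [mul_eq_smul_add_smul, hε, hχ]

def IsRotaBaxter {A : Type*} [NonUnitalNonAssocSemiring A] [Module k A] (P : A →ₗ[k] A) : Prop :=
  ∀ x y, P x * P y = P (x * P y) + P (P x * y)

variable {P : k[S] →ₗ[k] k[S]}

lemma IsRotaBaxter.character_sq (hP : IsRotaBaxter P) (φ : k[S] →ₙₐ[k] k) (x : k[S]) :
    φ (P x) ^ 2 = 2 * (e2Coeff x * e2Coeff (P x) * φ (P (single e2 1)) +
      (augmentation x * augmentation (P x) - e2Coeff x * e2Coeff (P x)) * φ (P (single e1 1))) := by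
  have h := congrArg φ (hP x x)
  rw [map_mul, mul_comm' (P x) x, mul_eq_smul_add_smul x (P x)] at h
  simp only [map_add, map_smul, smul_eq_mul] at h
  linear_combination h

lemma IsRotaBaxter.characters_single_eq_zero [IsReduced k] (hP : IsRotaBaxter P) (s : S) :
    augmentation (P (single s 1)) = 0 ∧ e2Coeff (P (single s 1)) = 0 := by
  have hε := hP.character_sq augmentation
  have hχ := hP.character_sq e2Coeff
  have h1ε := hε (single e1 1)
  have h1χ := hχ (single e1 1)
  have h2ε := hε (single e2 1)
  have h2χ := hχ (single e2 1)
  have h3ε := hε (single e3 1)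
  have h3χ := hχ (single e3 1)
  simp only [augmentation_single, e2Coeff_single, if_pos, reduceCtorEq, if_false]
    at h1ε h1χ h2ε h2χ h3ε h3χ
  set f₁ := augmentation (P (single e1 1))
  set f₂ := augmentation (P (single e2 1))
  set f₃ := augmentation (P (single e3 1))
  set g₁ := e2Coeff (P (single e1 1))
  set g₂ := e2Coeff (P (single e2 1))
  set g₃ := e2Coeff (P (single e3 1))
  have sq_eq_zero (a : k) (h : a ^ 2 = 0) : a = 0 := eq_zero_of_pow_eq_zero h
  have hf₁ : f₁ = 0 := sq_eq_zero _ (by linear_combination -h1ε)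
  have hg₁ : g₁ = 0 := sq_eq_zero _ (by linear_combination h1χ + 2 * g₁ * hf₁)
  have hf₃ : f₃ = 0 := sq_eq_zero _ (by linear_combination h3ε + 2 * f₃ * hf₁)
  have hg₃ : g₃ = 0 := sq_eq_zero _ (by linear_combination h3χ + 2 * f₃ * hg₁)
  have hg₂ : g₂ = 0 := sq_eq_zero _ (by linear_combination -h2χ - 2 * (f₂ - g₂) * hg₁)
  have hf₂ : f₂ = 0 := sq_eq_zero _ (by linear_combination h2ε + 2 * f₂ * hg₂ + 2 * (f₂ - g₂) * hf₁)
  cases s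
  exacts [⟨hf₁, hg₁⟩, ⟨hf₂, hg₂⟩, ⟨hf₃, hg₃⟩]

lemma characters_eq_zero_of_single
    (h : ∀ s, augmentation (P (single s 1)) = 0 ∧ e2Coeff (P (single s 1)) = 0) (x : k[S]) :
    augmentation (P x) = 0 ∧ e2Coeff (P x) = 0 := by
  induction x using MonoidAlgebra.induction_linear with
  | zero => simp
  | add x y hx hy => simp [hx.1, hx.2, hy.1, hy.2]
  | single s r =>
    rw [← mul_one r, ← smul_single', map_smul, map_smul, map_smul, (h s).1, (h s).2]
    simp

lemma isRotaBaxter_iff [IsReduced k] :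
    IsRotaBaxter P ↔ ∀ s, augmentation (P (single s 1)) = 0 ∧ e2Coeff (P (single s 1)) = 0 := by
  refine ⟨IsRotaBaxter.characters_single_eq_zero, fun h x y => ?_⟩
  have hP (z : k[S]) (w : k[S]) : P z * w = 0 :=
    mul_eq_zero_of_augmentation_of_e2Coeff (characters_eq_zero_of_single h z).1
      (characters_eq_zero_of_single h z).2 w
  rw [hP, mul_comm', hP, hP, map_zero, add_zero]

end

theorem rbo_CS3_general {k : Type*} [Field k]
    (P : MonoidAlgebra k S →ₗ[k] MonoidAlgebra k S) (C : S → S → k)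
    (hC : ∀ i, P (MonoidAlgebra.single i 1) = ∑ j, MonoidAlgebra.single j (C i j)) :
    (∀ x y, P x * P y = P (x * P y) + P (P x * y)) ↔
      (∃ a b c : k, C = mat3 a 0 (-a) b 0 (-b) c 0 (-c)) := by
  refine isRotaBaxter_iff.trans ?_
  rw [exists_eq_mat3_iff]
  refine forall_congr' fun s => ?_
  simp [hC, sum_univ_S]

theorem rbo_CS3 {k : Type*} [Field k] [CharZero k]
    (P : MonoidAlgebra k S →ₗ[k] MonoidAlgebra k S) (C : S → S → k)
    (hC : ∀ i, P (MonoidAlgebra.single i 1) = ∑ j, MonoidAlgebra.single j (C i j)) :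
    (∀ x y, P x * P y = P (x * P y) + P (P x * y)) ↔
      (∃ a b c : k, C = mat3 a 0 (-a) b 0 (-b) c 0 (-c)) :=
  rbo_CS3_general P C hC

end Stmt7
end

section
/- Let S = CS(4) be the commutative semigroup of order 3 in which e_2 e_2 = e_2, e_3 e_3 = e_3, and all other products e_i e_j equal e_1. The only Rota-Baxter operator of weight zero on k[S] is the zero operator; that is, a k-linear operator P on k[S] is a Rota-Baxter operator of weight zero if and only if its matrix C_P is the 3x3 zero matrix. -/
/-! The three characters of `S` (the augmentation and the indicators of `e2`, `e3`) extend to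
characters `χ` of `k[S]` that separate points, and `e1`, `e2 - e1`, `e3 - e1` are idempotents `e`
with `e * y = y * e = χ y • e` for the matching `χ`. For such a pair the Rota–Baxter identity at
`x = y = e` reads `P e * P e = 2 χ (P e) • P e`; applying `χ` gives `χ (P e) = 0`, hence
`P e * P e = 0`, and so `P e = 0` because every character kills it. These idempotents span `k[S]`. -/

namespace Stmt8

inductive S : Type
  | e1 | e2 | e3
  deriving DecidableEq

instance : Fintype S := ⟨{S.e1, S.e2, S.e3}, fun x => by cases x <;> decide⟩

open S

/-- Multiplication table of the semigroup. -/
instance : Mul S := ⟨fun a b => match a, b with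
  | e1, e1 => e1
  | e1, e2 => e1
  | e1, e3 => e1
  | e2, e1 => e1
  | e2, e2 => e2
  | e2, e3 => e1
  | e3, e1 => e1
  | e3, e2 => e1
  | e3, e3 => e3⟩

instance : Semigroup S := { mul_assoc := by decide }

/-- The 3×3 matrix (rows = first index) as a function `S → S → k`. -/
def mat3 {k : Type*} (a11 a12 a13 a21 a22 a23 a31 a32 a33 : k) : S → S → k :=
  fun i j => match i, j with
  | e1, e1 => a11 | e1, e2 => a12 | e1, e3 => a13
  | e2, e1 => a21 | e2, e2 => a22 | e2, e3 => a23
  | e3, e1 => a31 | e3, e2 => a32 | e3, e3 => a33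

end Stmt8

open MonoidAlgebra

def IsRotaBaxterOfWeightZero {k A : Type*} [Semiring k] [NonUnitalNonAssocSemiring A] [Module k A]
    (P : A →ₗ[k] A) : Prop :=
  ∀ x y, P x * P y = P (x * P y) + P (P x * y)

theorem IsRotaBaxterOfWeightZero.apply_mul_self_eq_zero {k A : Type*} [CommRing k]
    [NoZeroDivisors k] [NonUnitalNonAssocSemiring A] [Module k A] {P : A →ₗ[k] A}
    (hP : IsRotaBaxterOfWeightZero P) (χ : A →ₙₐ[k] k) {e : A}
    (hl : ∀ y, e * y = χ y • e) (hr : ∀ y, y * e = χ y • e) :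
    P e * P e = 0 := by
  have hsq : P e * P e = (2 * χ (P e)) • P e := by
    rw [hP, hl, hr, map_smul, two_mul, add_smul]
  have hχ : χ (P e) = 0 := by
    have h := congrArg χ hsq
    rw [map_mul, map_smul, smul_eq_mul] at h
    exact mul_self_eq_zero.mp (by linear_combination -h)
  rw [hsq, hχ, mul_zero, zero_smul]

theorem MonoidAlgebra.linearMap_eq_zero_iff_single {R M : Type*} [CommSemiring R]
    (f : R[M] →ₗ[R] R[M]) : f = 0 ↔ ∀ i, f (single i 1) = 0 :=
  ⟨fun h i => by simp [h], fun h => lhom_ext' fun i => LinearMap.ext_ring (by simpa using h i)⟩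

theorem MonoidAlgebra.linearMap_eq_zero_iff {R M : Type*} [CommSemiring R] [Fintype M]
    (f : R[M] →ₗ[R] R[M]) (C : M → M → R)
    (hC : ∀ i, f (single i 1) = ∑ j, single j (C i j)) : f = 0 ↔ C = 0 := by
  classical
  have hcoeff : ∀ i j, (f (single i 1)).coeff j = C i j := by
    intro i j
    simp [hC, coeff_sum, Finsupp.single_apply]
  rw [linearMap_eq_zero_iff_single, funext_iff]
  refine forall_congr' fun i => ?_
  rw [funext_iff, ← coeff_inj, Finsupp.ext_iff]
  simp [hcoeff]

namespace Stmt8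

open S

theorem S.mul_eq_ite (t t' : S) : t * t' = if t = t' then t else e1 := by
  cases t <;> cases t' <;> rfl

section

variable (k : Type*) [CommRing k]

noncomputable def character (s : S) : k[S] →ₙₐ[k] k :=
  liftMagma k
    { toFun t := if s = e1 ∨ t = s then 1 else 0
      map_mul' t t' := by cases s <;> cases t <;> cases t' <;> simp [S.mul_eq_ite] }

theorem character_apply (s : S) (x : k[S]) :
    character k s x = ∑ t, x.coeff t * if s = e1 ∨ t = s then 1 else 0 := by
  induction x using MonoidAlgebra.induction_linear with
  | zero => simp
  | add x y hx hy =>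
    simp only [map_add, hx, hy, coeff_add, Finsupp.add_apply, add_mul, Finset.sum_add_distrib]
  | single t c =>
    rw [Finset.sum_eq_single t (fun u _ hu => by simp [hu.symm]) (by simp)]
    simp [character]

noncomputable def idempotent (s : S) : k[S] := single s 1 - if s = e1 then 0 else single e1 1

theorem idempotent_mul (s : S) (y : k[S]) :
    idempotent k s * y = character k s y • idempotent k s := by
  induction y using MonoidAlgebra.induction_linear with
  | zero => simp
  | add x y hx hy => rw [mul_add, hx, hy, map_add, add_smul]
  | single t c =>
    cases s <;> cases t <;>
      simp [idempotent, character, sub_mul, single_mul_single, S.mul_eq_ite, smul_sub]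

theorem mul_idempotent (s : S) (y : k[S]) :
    y * idempotent k s = character k s y • idempotent k s := by
  induction y using MonoidAlgebra.induction_linear with
  | zero => simp
  | add x y hx hy => rw [add_mul, hx, hy, map_add, add_smul]
  | single t c =>
    cases s <;> cases t <;>
      simp [idempotent, character, mul_sub, single_mul_single, S.mul_eq_ite, smul_sub]

theorem eq_zero_of_forall_character_eq_zero {x : k[S]} (h : ∀ s, character k s x = 0) :
    x = 0 := by
  have h1 : x.coeff e1 + (x.coeff e2 + x.coeff e3) = 0 := by
    simpa [character_apply, Finset.univ, Fintype.elems] using h e1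
  have h2 : x.coeff e2 = 0 := by simpa [character_apply, Finset.univ, Fintype.elems] using h e2
  have h3 : x.coeff e3 = 0 := by simpa [character_apply, Finset.univ, Fintype.elems] using h e3
  ext (_ | _ | _) <;> simp only [coeff_zero, Finsupp.coe_zero, Pi.zero_apply]
  · linear_combination h1 - h2 - h3
  · exact h2
  · exact h3

theorem isRotaBaxterOfWeightZero_iff_eq_zero [NoZeroDivisors k] (P : k[S] →ₗ[k] k[S]) :
    IsRotaBaxterOfWeightZero P ↔ P = 0 := by
  refine ⟨fun hP => ?_, fun hP x y => by simp [hP]⟩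
  have hidem (s : S) : P (idempotent k s) = 0 :=
    eq_zero_of_forall_character_eq_zero k fun t => mul_self_eq_zero.mp <| by
      rw [← map_mul, hP.apply_mul_self_eq_zero (character k s) (idempotent_mul k s)
        (mul_idempotent k s), map_zero]
  have he1 : P (single e1 1) = 0 := by simpa [idempotent] using hidem e1
  rw [linearMap_eq_zero_iff_single]
  rintro (_ | _ | _)
  · exact he1
  · simpa [idempotent, he1] using hidem e2
  · simpa [idempotent, he1] using hidem e3

theorem mat3_zero : mat3 (0 : k) 0 0 0 0 0 0 0 0 = 0 := by
  funext i j; cases i <;> cases j <;> rfl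

end

theorem rbo_CS4_general {k : Type*} [Field k]
    (P : MonoidAlgebra k S →ₗ[k] MonoidAlgebra k S) (C : S → S → k)
    (hC : ∀ i, P (MonoidAlgebra.single i 1) = ∑ j, MonoidAlgebra.single j (C i j)) :
    (∀ x y, P x * P y = P (x * P y) + P (P x * y)) ↔
      (C = mat3 0 0 0 0 0 0 0 0 0) := by
  rw [mat3_zero, ← linearMap_eq_zero_iff P C hC]
  exact isRotaBaxterOfWeightZero_iff_eq_zero k P

theorem rbo_CS4 {k : Type*} [Field k] [CharZero k]
    (P : MonoidAlgebra k S →ₗ[k] MonoidAlgebra k S) (C : S → S → k)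
    (hC : ∀ i, P (MonoidAlgebra.single i 1) = ∑ j, MonoidAlgebra.single j (C i j)) :
    (∀ x y, P x * P y = P (x * P y) + P (P x * y)) ↔
      (C = mat3 0 0 0 0 0 0 0 0 0) :=
  rbo_CS4_general P C hC

end Stmt8
end

section
/- Let S = CS(9) be the commutative semigroup of order 3 with multiplication e_1 e_1 = e_1 e_2 = e_2 e_1 = e_2 e_2 = e_1, e_1 e_3 = e_3 e_1 = e_2 e_3 = e_3 e_2 = e_3, and e_3 e_3 = e_1. A k-linear operator P on k[S] is a Rota-Baxter operator of weight zero if and only if its matrix C_P equals [[a, -a, 0], [b, -b, 0], [c, -c, 0]] for some a, b, c in k. -/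
/- Statement 11: RBOs of weight zero on the semigroup algebra of CS(9). -/

namespace Stmt11

inductive S : Type
  | e1 | e2 | e3
  deriving DecidableEq

open S

instance : Fintype S := ⟨{e1, e2, e3}, fun x => by cases x <;> decide⟩

/-- Multiplication table of the semigroup. -/
instance : Mul S := ⟨fun a b => match a, b with
  | e1, e1 => e1
  | e1, e2 => e1
  | e1, e3 => e3
  | e2, e1 => e1
  | e2, e2 => e1
  | e2, e3 => e3
  | e3, e1 => e3
  | e3, e2 => e3
  | e3, e3 => e1⟩

instance : Semigroup S := { mul_assoc := by decide }

/-- The 3×3 matrix (rows = first index) as a function `S → S → k`. -/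
def mat3 {k : Type*} (a11 a12 a13 a21 a22 a23 a31 a32 a33 : k) : S → S → k :=
  fun i j => match i, j with
  | e1, e1 => a11 | e1, e2 => a12 | e1, e3 => a13
  | e2, e1 => a21 | e2, e2 => a22 | e2, e3 => a23
  | e3, e1 => a31 | e3, e2 => a32 | e3, e3 => a33

/-!
Identifying `e2` with `e1` maps `S` onto the group `{e1, e3}` of order two, and the product of
`k[S]` factors through the induced map to its group algebra, with coordinates `proj₁`, `proj₃`
(so `e2 - e1` annihilates `k[S]`). Hence only `pᵢ = proj₁ (P eᵢ) = C i e1 + C i e2` and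
`qᵢ = proj₃ (P eᵢ) = C i e3` enter the projected Rota–Baxter identity. On the pairs `(e1, e1)`,
`(e1, e3)`, `(e3, e3)`, `(e2, e2)` it gives `q₁ q₃ = 0`, `q₁² + q₃² = 0`, `p₁² = p₃² = 0` and
`p₂² + q₂² = p₂ q₂ = 0`, so all `pᵢ, qᵢ` vanish. Conversely, if they vanish then `P` takes values
in `k (e1 - e2)`, and both sides of the identity are zero.
-/

open MonoidAlgebra

noncomputable def proj₁ {k : Type*} [CommSemiring k] : MonoidAlgebra k S →ₗ[k] k :=
  (Finsupp.lapply e1 + Finsupp.lapply e2) ∘ₗ (coeffLinearEquiv k).toLinearMap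

noncomputable def proj₃ {k : Type*} [CommSemiring k] : MonoidAlgebra k S →ₗ[k] k :=
  Finsupp.lapply e3 ∘ₗ (coeffLinearEquiv k).toLinearMap

lemma sum_univ_S {M : Type*} [AddCommMonoid M] (f : S → M) : ∑ s, f s = f e1 + f e2 + f e3 := by
  simp [Finset.univ, Fintype.elems, add_assoc]

section Projection

variable {k : Type*} [CommSemiring k]

lemma proj₁_apply (x : MonoidAlgebra k S) : proj₁ x = x.coeff e1 + x.coeff e2 := rfl

lemma proj₃_apply (x : MonoidAlgebra k S) : proj₃ x = x.coeff e3 := rfl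

@[simp]
lemma proj₁_single (s : S) (c : k) : proj₁ (single s c) = if s = e3 then 0 else c := by
  cases s <;> simp [proj₁_apply]

@[simp]
lemma proj₃_single (s : S) (c : k) : proj₃ (single s c) = if s = e3 then c else 0 := by
  cases s <;> simp [proj₃_apply]

lemma eq_single_add_single_add_single (x : MonoidAlgebra k S) :
    x = single e1 (x.coeff e1) + single e2 (x.coeff e2) + single e3 (x.coeff e3) := by
  ext s; cases s <;> simp

lemma mul_eq_single_add_single (x y : MonoidAlgebra k S) :
    x * y = single e1 (proj₁ x * proj₁ y + proj₃ x * proj₃ y)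
      + single e3 (proj₁ x * proj₃ y + proj₃ x * proj₁ y) := by
  conv_lhs => rw [eq_single_add_single_add_single x, eq_single_add_single_add_single y]
  simp only [add_mul, mul_add, single_mul_single]
  ext s; cases s <;> simp +decide [Finsupp.single_apply, proj₁_apply, proj₃_apply] <;> ring

lemma proj₁_mul (x y : MonoidAlgebra k S) :
    proj₁ (x * y) = proj₁ x * proj₁ y + proj₃ x * proj₃ y := by
  simp [mul_eq_single_add_single x y, proj₁_apply, proj₃_apply]

lemma proj₃_mul (x y : MonoidAlgebra k S) :
    proj₃ (x * y) = proj₁ x * proj₃ y + proj₃ x * proj₁ y := by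
  simp [mul_eq_single_add_single x y, proj₁_apply, proj₃_apply]

lemma mul_eq_zero_of_proj_eq_zero_left {x : MonoidAlgebra k S} (h₁ : proj₁ x = 0)
    (h₃ : proj₃ x = 0) (y : MonoidAlgebra k S) : x * y = 0 := by
  rw [mul_eq_single_add_single, h₁, h₃]
  simp

lemma mul_eq_zero_of_proj_eq_zero_right {y : MonoidAlgebra k S} (h₁ : proj₁ y = 0)
    (h₃ : proj₃ y = 0) (x : MonoidAlgebra k S) : x * y = 0 := by
  rw [mul_eq_single_add_single, h₁, h₃]
  simp

lemma apply_mul_eq {M : Type*} [AddCommMonoid M] [Module k M] (f : MonoidAlgebra k S →ₗ[k] M)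
    (x y : MonoidAlgebra k S) :
    f (x * y) = (proj₁ x * proj₁ y + proj₃ x * proj₃ y) • f (single e1 1)
      + (proj₁ x * proj₃ y + proj₃ x * proj₁ y) • f (single e3 1) := by
  rw [mul_eq_single_add_single, map_add, ← map_smul, ← map_smul, smul_single', smul_single',
    mul_one, mul_one]

end Projection

lemma eq_zero_and_eq_zero_of_sq_add_sq_eq_zero {R : Type*} [CommRing R] [NoZeroDivisors R]
    {a b : R} (h : a ^ 2 + b ^ 2 = 0) (hab : a * b = 0) : a = 0 ∧ b = 0 := by
  have ha : a = 0 := pow_eq_zero_iff (n := 3) (by norm_num) |>.mp <| by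
    linear_combination a * h - b * hab
  exact ⟨ha, pow_eq_zero_iff (n := 2) (by norm_num) |>.mp <| by linear_combination h - a * ha⟩

section RotaBaxter

variable {k : Type*} [CommRing k] {P : MonoidAlgebra k S →ₗ[k] MonoidAlgebra k S}
  {C : S → S → k}

lemma proj₁_map_single (hC : ∀ i, P (single i 1) = ∑ j, single j (C i j)) (i : S) (c : k) :
    proj₁ (P (single i c)) = c * (C i e1 + C i e2) := by
  rw [← mul_one c, ← smul_single', map_smul, map_smul, hC, mul_one, sum_univ_S]
  simp

lemma proj₃_map_single (hC : ∀ i, P (single i 1) = ∑ j, single j (C i j)) (i : S) (c : k) :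
    proj₃ (P (single i c)) = c * C i e3 := by
  rw [← mul_one c, ← smul_single', map_smul, map_smul, hC, mul_one, sum_univ_S]
  simp

lemma coeff_eq_zero_of_isRotaBaxter [NoZeroDivisors k] [NeZero (2 : k)]
    (hC : ∀ i, P (single i 1) = ∑ j, single j (C i j))
    (hP : ∀ x y, P x * P y = P (x * P y) + P (P x * y)) (i : S) :
    C i e1 + C i e2 = 0 ∧ C i e3 = 0 := by
  have E₁ (i j : S) := congrArg proj₁ (hP (single i 1) (single j 1))
  have E₃ (i j : S) := congrArg proj₃ (hP (single i 1) (single j 1))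
  simp only [apply_mul_eq P, map_add, map_smul, smul_eq_mul, proj₁_mul, proj₃_mul,
    proj₁_map_single hC, proj₃_map_single hC, proj₁_single, proj₃_single] at E₁ E₃
  have h₁₁ := E₁ e1 e1
  have h₂₂ := E₁ e2 e2
  have h₃₃ := E₁ e3 e3
  have h₁₁' := E₃ e1 e1
  have h₁₃' := E₃ e1 e3
  have h₂₂' := E₃ e2 e2
  simp only [reduceCtorEq, if_true, if_false, one_mul, mul_one, mul_zero, zero_mul, add_zero,
    zero_add] at h₁₁ h₂₂ h₃₃ h₁₁' h₁₃' h₂₂'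
  have cancel_two {t : k} (h : 2 * t = 0) : t = 0 := (mul_eq_zero.mp h).resolve_left two_ne_zero
  obtain ⟨hq₁, hq₃⟩ : C e1 e3 = 0 ∧ C e3 e3 = 0 :=
    eq_zero_and_eq_zero_of_sq_add_sq_eq_zero (by linear_combination -h₁₃')
      (cancel_two (by linear_combination -h₁₁'))
  have hp₁ : C e1 e1 + C e1 e2 = 0 :=
    pow_eq_zero_iff two_ne_zero |>.mp <| by
      linear_combination -h₁₁ + (C e1 e3 - 2 * (C e3 e1 + C e3 e2)) * hq₁
  have hp₃ : C e3 e1 + C e3 e2 = 0 :=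
    pow_eq_zero_iff two_ne_zero |>.mp <| by
      linear_combination -h₃₃ + (C e3 e3 - 2 * (C e1 e1 + C e1 e2)) * hq₃
  obtain ⟨hp₂, hq₂⟩ : C e2 e1 + C e2 e2 = 0 ∧ C e2 e3 = 0 :=
    eq_zero_and_eq_zero_of_sq_add_sq_eq_zero
      (by linear_combination h₂₂ + 2 * (C e2 e1 + C e2 e2) * hp₁ + 2 * C e2 e3 * hp₃)
      (cancel_two <| by
        linear_combination h₂₂' + 2 * (C e2 e1 + C e2 e2) * hq₁ + 2 * C e2 e3 * hq₃)
  cases i <;> constructor <;> assumption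

lemma isRotaBaxter_of_coeff_eq_zero (hC : ∀ i, P (single i 1) = ∑ j, single j (C i j))
    (h : ∀ i, C i e1 + C i e2 = 0 ∧ C i e3 = 0) :
    ∀ x y, P x * P y = P (x * P y) + P (P x * y) := by
  have hPx (x : MonoidAlgebra k S) : proj₁ (P x) = 0 ∧ proj₃ (P x) = 0 := by
    induction x using induction_linear with
    | zero => simp
    | add x y hx hy => simp [hx, hy]
    | single s c => simp [proj₁_map_single hC, proj₃_map_single hC, h s]
  intro x y
  rw [mul_eq_zero_of_proj_eq_zero_left (hPx x).1 (hPx x).2,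
    mul_eq_zero_of_proj_eq_zero_left (hPx x).1 (hPx x).2,
    mul_eq_zero_of_proj_eq_zero_right (hPx y).1 (hPx y).2]
  simp

end RotaBaxter

lemma exists_eq_mat3_iff {k : Type*} [AddGroup k] (C : S → S → k) :
    (∃ a b c : k, C = mat3 a (-a) 0 b (-b) 0 c (-c) 0) ↔
      ∀ i, C i e1 + C i e2 = 0 ∧ C i e3 = 0 := by
  constructor
  · rintro ⟨a, b, c, rfl⟩ i
    cases i <;> simp [mat3]
  · intro h
    refine ⟨C e1 e1, C e2 e1, C e3 e1, funext fun i ↦ funext fun j ↦ ?_⟩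
    obtain ⟨h₂, h₃⟩ := h i
    cases i <;> cases j <;> simp [mat3, h₃, eq_neg_of_add_eq_zero_right h₂]

theorem rbo_CS9 {k : Type*} [Field k] [CharZero k]
    (P : MonoidAlgebra k S →ₗ[k] MonoidAlgebra k S) (C : S → S → k)
    (hC : ∀ i, P (MonoidAlgebra.single i 1) = ∑ j, MonoidAlgebra.single j (C i j)) :
    (∀ x y, P x * P y = P (x * P y) + P (P x * y)) ↔
      (∃ a b c : k, C = mat3 a (-a) 0 b (-b) 0 c (-c) 0) := by
  rw [exists_eq_mat3_iff]
  exact ⟨coeff_eq_zero_of_isRotaBaxter hC, isRotaBaxter_of_coeff_eq_zero hC⟩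

end Stmt11
end

section
/- Let S = CS(11) be the commutative semigroup of order 3 with multiplication e_1 e_1 = e_1, e_1 e_2 = e_2 e_1 = e_1 e_3 = e_3 e_1 = e_2, and e_2 e_2 = e_2 e_3 = e_3 e_2 = e_3 e_3 = e_1. A k-linear operator P on k[S] is a Rota-Baxter operator of weight zero if and only if its matrix C_P equals [[0, a, -a], [0, b, -b], [0, c, -c]] for some a, b, c in k. -/
/-!
Both sides of the Rota-Baxter identity are bilinear, so it suffices to check it on pairs of
basis elements; comparing coefficients turns it into quadratic equations in the entries of `C`.
Since `e_2` and `e_3` multiply identically, a product only depends on the coordinates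
`x = c_1` and `u = c_2 + c_3` of its factors. With `x_i = c_{i1}` and `u_i = c_{i2} + c_{i3}`,
a few of the equations give `2 u_1 u_2 = 0` and `u_1^2 + u_2^2 = 0`, hence
`u_1 = u_2 = 0`; then `x_1^2 = x_2^2 = 0`, and row three satisfies `2 x_3 u_3 = 0` and
`x_3^2 + u_3^2 = 0`. The converse is a direct check of all 27 equations.
-/

/- Statement 12: RBOs of weight zero on the semigroup algebra of CS(11). -/

namespace Stmt12

inductive S : Type
  | e1 | e2 | e3
  deriving DecidableEq

instance : Fintype S :=
  ⟨⟨{S.e1, S.e2, S.e3}, by decide⟩, fun x => by cases x <;> decide⟩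

open S

/-- Multiplication table of the semigroup. -/
instance : Mul S := ⟨fun a b => match a, b with
  | e1, e1 => e1
  | e1, e2 => e2
  | e1, e3 => e2
  | e2, e1 => e2
  | e2, e2 => e1
  | e2, e3 => e1
  | e3, e1 => e2
  | e3, e2 => e1
  | e3, e3 => e1⟩

instance : Semigroup S := { mul_assoc := by decide }

/-- The 3×3 matrix (rows = first index) as a function `S → S → k`. -/
def mat3 {k : Type*} (a11 a12 a13 a21 a22 a23 a31 a32 a33 : k) : S → S → k :=
  fun i j => match i, j with
  | e1, e1 => a11 | e1, e2 => a12 | e1, e3 => a13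
  | e2, e1 => a21 | e2, e2 => a22 | e2, e3 => a23
  | e3, e1 => a31 | e3, e2 => a32 | e3, e3 => a33


open MonoidAlgebra

section RotaBaxter

variable {k G : Type*} [CommSemiring k] {P : MonoidAlgebra k G →ₗ[k] MonoidAlgebra k G}

lemma apply_single_of_matrix [Fintype G] {C : G → G → k}
    (hC : ∀ i, P (single i 1) = ∑ j, single j (C i j)) (i : G) (r : k) :
    P (single i r) = ∑ j, single j (r * C i j) := by
  rw [← mul_one r, ← smul_single', map_smul, hC, Finset.smul_sum]
  simp only [smul_single', mul_one]

variable [Mul G]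

lemma isRotaBaxter_iff_single :
    (∀ x y, P x * P y = P (x * P y) + P (P x * y)) ↔
      ∀ i j : G, P (single i 1) * P (single j 1) =
        P (single i 1 * P (single j 1)) + P (P (single i 1) * single j 1) := by
  refine ⟨fun h i j => h _ _, fun h => ?_⟩
  have hbilin : (LinearMap.mul k _).compl₁₂ P P =
      ((LinearMap.mul k _).compl₂ P).compr₂ P + ((LinearMap.mul k _).comp P).compr₂ P :=
    LinearMap.ext_basis (MonoidAlgebra.basis G k) (MonoidAlgebra.basis G k) fun i j => by
      simpa using h i j
  exact fun x y => by simpa using congr($hbilin x y)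

variable [Fintype G] [DecidableEq G]

def IsRotaBaxterMatrix (C : G → G → k) : Prop :=
  ∀ i j u, (∑ s, ∑ t, if s * t = u then C i s * C j t else 0) =
    ∑ t, C j t * C (i * t) u + ∑ s, C i s * C (s * j) u

lemma isRotaBaxter_iff_isRotaBaxterMatrix {C : G → G → k}
    (hC : ∀ i, P (single i 1) = ∑ j, single j (C i j)) :
    (∀ x y, P x * P y = P (x * P y) + P (P x * y)) ↔ IsRotaBaxterMatrix C := by
  rw [isRotaBaxter_iff_single]
  refine forall₂_congr fun i j => ?_
  have hPP : P (single i 1) * P (single j 1) = ∑ s, ∑ t, single (s * t) (C i s * C j t) := by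
    simp only [hC, Finset.sum_mul_sum, single_mul_single]
  have hleft : P (single i 1 * P (single j 1)) = ∑ t, ∑ u, single u (C j t * C (i * t) u) := by
    simp only [hC j, Finset.mul_sum, single_mul_single, one_mul, map_sum,
      apply_single_of_matrix hC]
  have hright : P (P (single i 1) * single j 1) = ∑ s, ∑ u, single u (C i s * C (s * j) u) := by
    simp only [hC i, Finset.sum_mul, single_mul_single, mul_one, map_sum,
      apply_single_of_matrix hC]
  rw [hPP, hleft, hright, ← coeff_inj, Finsupp.ext_iff]
  refine forall_congr' fun u => ?_
  simp only [coeff_sum, coeff_add, coeff_single, Finsupp.finsetSum_apply, Finsupp.add_apply,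
    Finsupp.single_apply, Finset.sum_ite_eq', Finset.mem_univ, if_true]

end RotaBaxter

lemma eq_zero_and_eq_zero_of_mul_eq_zero_of_sq_add_sq {R : Type*} [Semiring R] [NoZeroDivisors R]
    {u v : R} (hmul : u * v = 0) (hsq : u ^ 2 + v ^ 2 = 0) : u = 0 ∧ v = 0 := by
  rcases mul_eq_zero.mp hmul with rfl | rfl <;> simp_all

@[simp] lemma e1_mul_e1 : e1 * e1 = e1 := rfl
@[simp] lemma e1_mul_e2 : e1 * e2 = e2 := rfl
@[simp] lemma e1_mul_e3 : e1 * e3 = e2 := rfl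
@[simp] lemma e2_mul_e1 : e2 * e1 = e2 := rfl
@[simp] lemma e2_mul_e2 : e2 * e2 = e1 := rfl
@[simp] lemma e2_mul_e3 : e2 * e3 = e1 := rfl
@[simp] lemma e3_mul_e1 : e3 * e1 = e2 := rfl
@[simp] lemma e3_mul_e2 : e3 * e2 = e1 := rfl
@[simp] lemma e3_mul_e3 : e3 * e3 = e1 := rfl

lemma sum_univ_S {M : Type*} [AddCommMonoid M] (f : S → M) : ∑ j, f j = f e1 + f e2 + f e3 := by
  rw [show (Finset.univ : Finset S) = {e1, e2, e3} from rfl, Finset.sum_insert (by decide),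
    Finset.sum_insert (by decide), Finset.sum_singleton, add_assoc]

lemma isRotaBaxterMatrix_mat3 {k : Type*} [CommRing k] (a b c : k) :
    IsRotaBaxterMatrix (mat3 0 a (-a) 0 b (-b) 0 c (-c)) := by
  intro i j u
  cases i <;> cases j <;> cases u <;> simp [sum_univ_S, mat3]

lemma IsRotaBaxterMatrix.exists_eq_mat3 {k : Type*} [Field k] [CharZero k] {C : S → S → k}
    (h : IsRotaBaxterMatrix C) : ∃ a b c : k, C = mat3 0 a (-a) 0 b (-b) 0 c (-c) := by
  have h111 := h e1 e1 e1
  have h112 := h e1 e1 e2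
  have h113 := h e1 e1 e3
  have h122 := h e1 e2 e2
  have h123 := h e1 e2 e3
  have h221 := h e2 e2 e1
  have h331 := h e3 e3 e1
  have h332 := h e3 e3 e2
  have h333 := h e3 e3 e3
  simp only [sum_univ_S, e1_mul_e1, e1_mul_e2, e1_mul_e3, e2_mul_e1, e2_mul_e2, e2_mul_e3,
    e3_mul_e1, e3_mul_e2, e3_mul_e3, ↓reduceIte, reduceCtorEq, add_zero, zero_add]
    at h111 h112 h113 h122 h123 h221 h331 h332 h333
  have hu : C e1 e2 + C e1 e3 = 0 ∧ C e2 e2 + C e2 e3 = 0 := by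
    refine eq_zero_and_eq_zero_of_mul_eq_zero_of_sq_add_sq ?_ (by
      linear_combination -(h122 + h123))
    have : (2 : k) * ((C e1 e2 + C e1 e3) * (C e2 e2 + C e2 e3)) = 0 := by
      linear_combination -(h112 + h113)
    simpa using this
  have hx1 : C e1 e1 = 0 := pow_eq_zero_iff two_ne_zero |>.mp <| by
    linear_combination -h111 + (C e1 e2 + C e1 e3 - 2 * C e2 e1) * hu.1
  have hx2 : C e2 e1 = 0 := pow_eq_zero_iff two_ne_zero |>.mp <| by
    linear_combination -h221 + (C e2 e2 + C e2 e3 - 2 * C e1 e1) * hu.2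
  have hrow3 : C e3 e1 = 0 ∧ C e3 e2 + C e3 e3 = 0 := by
    refine eq_zero_and_eq_zero_of_mul_eq_zero_of_sq_add_sq ?_ (by
      linear_combination h331 + 2 * C e3 e1 * hx2 + 2 * (C e3 e2 + C e3 e3) * hx1)
    have : (2 : k) * (C e3 e1 * (C e3 e2 + C e3 e3)) = 0 := by
      linear_combination h332 + h333 + 2 * C e3 e1 * hu.2 + 2 * (C e3 e2 + C e3 e3) * hu.1
    simpa using this
  refine ⟨C e1 e2, C e2 e2, C e3 e2, funext fun i => funext fun j => ?_⟩
  cases i <;> cases j <;> simp only [mat3] <;> grind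

theorem rbo_CS11 {k : Type*} [Field k] [CharZero k]
    (P : MonoidAlgebra k S →ₗ[k] MonoidAlgebra k S) (C : S → S → k)
    (hC : ∀ i, P (MonoidAlgebra.single i 1) = ∑ j, MonoidAlgebra.single j (C i j)) :
    (∀ x y, P x * P y = P (x * P y) + P (P x * y)) ↔
      (∃ a b c : k, C = mat3 0 a (-a) 0 b (-b) 0 c (-c)) := by
  rw [isRotaBaxter_iff_isRotaBaxterMatrix hC]
  refine ⟨IsRotaBaxterMatrix.exists_eq_mat3, ?_⟩
  rintro ⟨a, b, c, rfl⟩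
  exact isRotaBaxterMatrix_mat3 a b c

end Stmt12
end

section
/- Let S = CS(12) be the cyclic group of order 3, with e_1 the identity, e_2 e_2 = e_3, e_2 e_3 = e_3 e_2 = e_1, and e_3 e_3 = e_2. The only Rota-Baxter operator of weight zero on the group algebra k[S] is the zero operator; that is, a k-linear operator P on k[S] is a Rota-Baxter operator of weight zero if and only if its matrix C_P is the 3x3 zero matrix. -/
/-
A Rota–Baxter operator `P` of weight zero on a finite-dimensional reduced commutative algebra
over a field of characteristic zero vanishes, and `k[C₃]` is reduced by Maschke's theorem.
Fix `x`, and put `u = P x` and `Q = P ∘ (x * ·)`. The Rota–Baxter identity says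
`[L_u, Q] = Q²`, so `ad L_u` acts on `k[Q]` as `Q² d/dQ`; hence the minimal polynomial `μ` of `Q`
divides `X² μ'`, which in characteristic zero forces `μ = Xᵈ`. The same identity gives
`u ^ (n + 1) = (n + 1)! • Qⁿ u`, so `u` is nilpotent, hence zero.
-/

namespace Stmt13

inductive S : Type
  | e1 | e2 | e3
  deriving DecidableEq

instance : Fintype S := ⟨{S.e1, S.e2, S.e3}, fun x => by cases x <;> decide⟩

open S

instance : Mul S := ⟨fun a b => match a, b with
  | e1, e1 => e1
  | e1, e2 => e2
  | e1, e3 => e3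
  | e2, e1 => e2
  | e2, e2 => e3
  | e2, e3 => e1
  | e3, e1 => e3
  | e3, e2 => e1
  | e3, e3 => e2⟩

instance : Semigroup S := { mul_assoc := by decide }

/-- The 3×3 matrix (rows = first index) as a function `S → S → k`. -/
def mat3 {k : Type*} (a11 a12 a13 a21 a22 a23 a31 a32 a33 : k) : S → S → k :=
  fun i j => match i, j with
  | e1, e1 => a11 | e1, e2 => a12 | e1, e3 => a13
  | e2, e1 => a21 | e2, e2 => a22 | e2, e3 => a23
  | e3, e1 => a31 | e3, e2 => a32 | e3, e3 => a33

end Stmt13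

open Polynomial

theorem Polynomial.eq_X_pow_of_dvd_X_sq_mul_derivative {K : Type*} [Field K] [CharZero K]
    {p : K[X]} (hp : p.Monic) (h : p ∣ X ^ 2 * derivative p) : p = X ^ p.natDegree := by
  obtain ⟨q, hpq, hXq⟩ := p.exists_eq_pow_rootMultiplicity_mul_and_not_dvd hp.ne_zero 0
  simp only [map_zero, sub_zero] at hpq hXq
  set j := p.rootMultiplicity 0
  have hq_dvd : q ∣ X ^ 2 * derivative q := by
    have hX2 : X ^ 2 * derivative p = X ^ j * (X * C (j : K) * q + X ^ 2 * derivative q) := by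
      rw [hpq, derivative_mul, derivative_X_pow]
      cases j
      · simp
      · simp
        ring
    rw [hX2, hpq] at h
    exact (dvd_add_right (dvd_mul_left q _)).1
      ((mul_dvd_mul_iff_left (pow_ne_zero j X_ne_zero)).1 h)
  have hcop : IsCoprime q (X ^ 2) := ((irreducible_X.coprime_iff_not_dvd).2 hXq).symm.pow_right
  have hq' : derivative q = 0 := by
    by_cases hdeg : q.natDegree = 0
    · rw [eq_C_of_natDegree_eq_zero hdeg, derivative_C]
    · exact eq_zero_of_dvd_of_natDegree_lt (hcop.dvd_of_dvd_mul_left hq_dvd)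
        (natDegree_derivative_lt hdeg)
  have hq_const : q.natDegree = 0 := derivative_eq_zero.1 hq'
  have hq_one : q = 1 := by
    have hlead : q.leadingCoeff = 1 := by
      simpa [hpq, leadingCoeff_mul] using hp.leadingCoeff
    rw [eq_C_of_natDegree_eq_zero hq_const, ← hq_const, ← leadingCoeff, hlead, map_one]
  rw [hpq, hq_one, mul_one, natDegree_X_pow]

section
variable {K R : Type*} [CommRing K] [Ring R] [Algebra K R] {a b : R}

theorem mul_pow_sub_pow_mul_of_mul_sub_mul_eq_sq (h : a * b - b * a = b ^ 2) (n : ℕ) :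
    a * b ^ n - b ^ n * a = n • b ^ (n + 1) := by
  induction n with
  | zero => simp
  | succ n ih =>
    calc a * b ^ (n + 1) - b ^ (n + 1) * a
        = (a * b ^ n - b ^ n * a) * b + b ^ n * (a * b - b * a) := by noncomm_ring
      _ = (n + 1) • b ^ (n + 2) := by
        rw [ih, h, smul_mul_assoc, ← pow_succ, ← pow_add, succ_nsmul]

theorem mul_aeval_sub_aeval_mul_of_mul_sub_mul_eq_sq (h : a * b - b * a = b ^ 2) (p : K[X]) :
    a * aeval b p - aeval b p * a = aeval b (X ^ 2 * derivative p) := by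
  induction p using Polynomial.induction_on' with
  | add p q hp hq => simp only [map_add, mul_add, add_mul]; rw [← hp, ← hq]; abel
  | monomial n c =>
    have hXn : aeval b (X ^ 2 * derivative (X ^ n : K[X])) = n • b ^ (n + 1) := by
      rcases n with _ | n
      · simp
      · simp
        rw [← Nat.cast_succ, (Nat.commute_cast _ _).left_comm, ← pow_add, add_comm 2]
    rw [← C_mul_X_pow_eq_monomial, ← smul_eq_C_mul, derivative_smul, mul_smul_comm, map_smul,
      map_smul, aeval_X_pow, mul_smul_comm, smul_mul_assoc, ← smul_sub,
      mul_pow_sub_pow_mul_of_mul_sub_mul_eq_sq h, hXn]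
end

theorem isNilpotent_of_mul_sub_mul_eq_sq {K R : Type*} [Field K] [CharZero K] [Ring R]
    [Algebra K R] [FiniteDimensional K R] {a b : R} (h : a * b - b * a = b ^ 2) :
    IsNilpotent b := by
  have hdvd : minpoly K b ∣ X ^ 2 * derivative (minpoly K b) := by
    apply minpoly.dvd
    rw [← mul_aeval_sub_aeval_mul_of_mul_sub_mul_eq_sq h, minpoly.aeval, mul_zero, zero_mul,
      sub_zero]
  have hmin := minpoly.aeval K b
  rw [eq_X_pow_of_dvd_X_sq_mul_derivative (minpoly.monic (Algebra.IsIntegral.isIntegral b)) hdvd,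
    map_pow, aeval_X] at hmin
  exact ⟨_, hmin⟩

def IsRotaBaxterWeightZero {K A : Type*} [CommSemiring K] [NonUnitalNonAssocSemiring A]
    [Module K A] (P : A →ₗ[K] A) : Prop :=
  ∀ x y, P x * P y = P (x * P y) + P (P x * y)

namespace IsRotaBaxterWeightZero

section

variable {K A : Type*} [CommRing K] [CommRing A] [Algebra K A] {P : Module.End K A}

theorem mul_apply_mulLeft (hP : IsRotaBaxterWeightZero P) (x v : A) :
    P x * (P ∘ₗ LinearMap.mulLeft K x) v =
      (P ∘ₗ LinearMap.mulLeft K x) ((P ∘ₗ LinearMap.mulLeft K x) v) +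
        (P ∘ₗ LinearMap.mulLeft K x) (P x * v) := by
  simp only [LinearMap.comp_apply, LinearMap.mulLeft_apply]
  rw [hP, mul_left_comm]

theorem mulLeft_mul_sub_mul_mulLeft (hP : IsRotaBaxterWeightZero P) (x : A) :
    LinearMap.mulLeft K (P x) * (P ∘ₗ LinearMap.mulLeft K x) -
      (P ∘ₗ LinearMap.mulLeft K x) * LinearMap.mulLeft K (P x) =
      (P ∘ₗ LinearMap.mulLeft K x) ^ 2 := by
  ext v
  simp only [LinearMap.sub_apply, Module.End.mul_apply, pow_two, LinearMap.mulLeft_apply]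
  rw [hP.mul_apply_mulLeft, add_sub_cancel_right]

theorem pow_succ_eq_smul (hP : IsRotaBaxterWeightZero P) (x : A) (n : ℕ) :
    P x ^ (n + 1) = (n + 1) • (P ∘ₗ LinearMap.mulLeft K x) (P x ^ n) := by
  induction n with
  | zero => simp
  | succ n ih =>
    rw [pow_succ', ih, mul_smul_comm, hP.mul_apply_mulLeft, smul_add, ← map_nsmul, ← ih,
      ← pow_succ', ← succ_nsmul']

theorem pow_succ_eq_factorial_smul (hP : IsRotaBaxterWeightZero P) (x : A) (n : ℕ) :
    P x ^ (n + 1) = (n + 1).factorial • ((P ∘ₗ LinearMap.mulLeft K x) ^ n) (P x) := by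
  induction n with
  | zero => simp
  | succ n ih =>
    rw [hP.pow_succ_eq_smul, ih, map_nsmul, smul_smul, Nat.factorial_succ (n + 1), pow_succ',
      Module.End.mul_apply]

end

theorem eq_zero {K A : Type*} [Field K] [CharZero K] [CommRing A] [IsReduced A] [Algebra K A]
    [FiniteDimensional K A] {P : Module.End K A} (hP : IsRotaBaxterWeightZero P) : P = 0 := by
  ext x
  obtain ⟨n, hn⟩ := isNilpotent_of_mul_sub_mul_eq_sq (K := K) (hP.mulLeft_mul_sub_mul_mulLeft x)
  have hx : IsNilpotent (P x) := ⟨n + 1, by rw [hP.pow_succ_eq_factorial_smul, hn]; simp⟩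
  exact hx.eq_zero

end IsRotaBaxterWeightZero

theorem MonoidAlgebra.linearMap_eq_zero_iff_matrix_eq_zero {k M : Type*} [Semiring k] [Fintype M]
    (P : MonoidAlgebra k M →ₗ[k] MonoidAlgebra k M) (C : M → M → k)
    (hC : ∀ i, P (MonoidAlgebra.single i 1) = ∑ j, MonoidAlgebra.single j (C i j)) :
    P = 0 ↔ C = 0 := by
  classical
  constructor
  · intro hP
    funext i j
    have := congrArg (fun f => f.coeff j) (hC i)
    simpa [hP, Finsupp.single_apply] using this.symm
  · intro hC0
    ext m
    simp [hC, hC0]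

namespace Stmt13

open S

-- Not an instance: `*` on `k[S]` has to keep elaborating through the `Mul S` above.
abbrev commGroup : CommGroup S where
  __ := (inferInstance : Semigroup S)
  one := e1
  inv := fun | e1 => e1 | e2 => e3 | e3 => e2
  one_mul := by decide
  mul_one := by decide
  inv_mul_cancel := by decide
  mul_comm := by decide

theorem isRotaBaxterWeightZero_iff {k : Type*} [Field k] [CharZero k]
    (P : MonoidAlgebra k S →ₗ[k] MonoidAlgebra k S) : IsRotaBaxterWeightZero P ↔ P = 0 := by
  let := commGroup
  have : NeZero (Nat.card S : k) := ⟨by rw [Nat.card_eq_fintype_card]; exact three_ne_zero⟩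
  have : IsReduced (MonoidAlgebra k S) := inferInstance
  refine ⟨fun hP => IsRotaBaxterWeightZero.eq_zero hP, ?_⟩
  rintro rfl
  simp [IsRotaBaxterWeightZero]

theorem mat3_zero {k : Type*} [Zero k] : mat3 (0 : k) 0 0 0 0 0 0 0 0 = 0 := by
  funext i j
  cases i <;> cases j <;> rfl

theorem rbo_CS12 {k : Type*} [Field k] [CharZero k]
    (P : MonoidAlgebra k S →ₗ[k] MonoidAlgebra k S) (C : S → S → k)
    (hC : ∀ i, P (MonoidAlgebra.single i 1) = ∑ j, MonoidAlgebra.single j (C i j)) :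
    (∀ x y, P x * P y = P (x * P y) + P (P x * y)) ↔
      (C = mat3 0 0 0 0 0 0 0 0 0) := by
  rw [mat3_zero, ← MonoidAlgebra.linearMap_eq_zero_iff_matrix_eq_zero P C hC]
  exact isRotaBaxterWeightZero_iff P

end Stmt13
end

section
/- Let S = NCS(5) be the left zero semigroup of order 3, i.e. e_i e_j = e_i for all i, j in {1,2,3}. A k-linear operator P on k[S] is a Rota-Baxter operator of weight zero if and only if its matrix C_P belongs to one of the following families (all parameters in k, and in each family the listed square-root parameter s or F is an element of k satisfying the stated quadratic equation): (1) [[a*c/F, a*b/F, a],[c*d/F, b*d/F, d],[c, b, F]] with a, b, c, d nonzero and F nonzero satisfying F^2 = -(a*c + b*d); (2) [[0,0,0],[-c*s/b, -s, d],[c, b, s]] with b, c, d nonzero and s^2 = -b*d; (3) [[-s, 0, a],[-d*s/a, 0, d],[c, 0, s]] with a, c, d nonzero and s^2 = -a*c; (4) [[0, -a*s/d, a],[0, -s, d],[0, b, s]] with a, b, d nonzero and s^2 = -b*d; (5) [[-s, -b*s/c, a],[0,0,0],[c, b, s]] with a, b, c nonzero and s^2 = -a*c; (6) [[0,0,0],[0,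 -s, d],[0, b, s]] with b, d nonzero and s^2 = -b*d; (7) [[-e*b/c, -e*b^2/c^2, 0],[e, e*b/c, 0],[c, b, 0]] with b, c nonzero and e arbitrary; (8) [[a*e/d, -a^2*e/d^2, a],[e, -a*e/d, d],[0,0,0]] with a, d nonzero and e arbitrary; (9) [[-s, 0, a],[0,0,0],[c, 0, s]] with a, c nonzero and s^2 = -a*c; (10) [[0,0,0],[e, 0, d],[0,0,0]] with d nonzero and e arbitrary; (11) [[0,0,0],[e, 0, 0],[c, 0, 0]] with c nonzero and e arbitrary; (12) [[0, e, 0],[0,0,0],[0, b, 0]] with b nonzero and e arbitrary; (13) [[0, e, a],[0,0,0],[0,0,0]] with a nonzero and e arbitrary; (14) [[s, e, 0],[f, -s, 0],[0,0,0]] with e, f arbitrary and s^2 = -e*f. -/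
/-!
In the semigroup algebra of a left zero semigroup, `x * y = ε(y) • x` where `ε` is the
augmentation (sum of coefficients). The Rota–Baxter identity therefore collapses to
`ε(y) • P (P x) = 0`, i.e. to `P ∘ P = 0`, i.e. to `C * C = 0` for the matrix of `P`.
A square-zero `3 × 3` matrix has vanishing `2 × 2` minors and trace zero, and these relations
determine it from the zero pattern of its entries `C₁₃, C₂₃, C₃₁, C₃₂`: of the sixteen patterns,
two are impossible and the other fourteen are the fourteen families.
-/

namespace Stmt18

inductive S : Type
  | e1 | e2 | e3
  deriving DecidableEq

instance : Fintype S := ⟨{S.e1, S.e2, S.e3}, fun x => by cases x <;> simp⟩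

open S

/-- Multiplication table of the semigroup. -/
instance : Mul S := ⟨fun a b => match a, b with
  | e1, e1 => e1
  | e1, e2 => e1
  | e1, e3 => e1
  | e2, e1 => e2
  | e2, e2 => e2
  | e2, e3 => e2
  | e3, e1 => e3
  | e3, e2 => e3
  | e3, e3 => e3⟩

instance : Semigroup S := { mul_assoc := by decide }

/-- The 3×3 matrix (rows = first index) as a function `S → S → k`. -/
def mat3 {k : Type*} (a11 a12 a13 a21 a22 a23 a31 a32 a33 : k) : S → S → k :=
  fun i j => match i, j with
  | e1, e1 => a11 | e1, e2 => a12 | e1, e3 => a13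
  | e2, e1 => a21 | e2, e2 => a22 | e2, e3 => a23
  | e3, e1 => a31 | e3, e2 => a32 | e3, e3 => a33

section LeftZero

variable {k G : Type*} [CommRing k] [Mul G]

theorem mul_eq_smul_of_left_zero (hG : ∀ a b : G, a * b = a) (x y : MonoidAlgebra k G) :
    x * y = (y.coeff.sum fun _ r => r) • x := by
  induction x using MonoidAlgebra.induction_linear with
  | zero => simp
  | add x x' hx hx' => rw [add_mul, hx, hx', smul_add]
  | single a r =>
    induction y using MonoidAlgebra.induction_linear with
    | zero => simp
    | add y y' hy hy' =>
      rw [mul_add, hy, hy', ← add_smul, MonoidAlgebra.coeff_add,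
        Finsupp.sum_add_index' (fun _ => rfl) (fun _ _ _ => rfl)]
    | single b s => simp [hG, mul_comm]

theorem isRotaBaxter_iff_comp_self_eq_zero [Nonempty G] (hG : ∀ a b : G, a * b = a)
    (P : MonoidAlgebra k G →ₗ[k] MonoidAlgebra k G) :
    (∀ x y, P x * P y = P (x * P y) + P (P x * y)) ↔ P ∘ₗ P = 0 := by
  simp only [mul_eq_smul_of_left_zero hG, map_smul, left_eq_add]
  constructor
  · intro h
    obtain ⟨g⟩ := ‹Nonempty G›
    refine LinearMap.ext fun x => ?_
    simpa using h x (MonoidAlgebra.single g 1)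
  · intro h x y
    simp [← LinearMap.comp_apply, h]

end LeftZero

open scoped Matrix

section MatrixOfOperator

variable {k G : Type*} [CommRing k] [Fintype G] [DecidableEq G]

theorem toMatrix_basis_eq_transpose (P : MonoidAlgebra k G →ₗ[k] MonoidAlgebra k G)
    (C : G → G → k)
    (hC : ∀ i, P (MonoidAlgebra.single i 1) = ∑ j, MonoidAlgebra.single j (C i j)) :
    LinearMap.toMatrix (MonoidAlgebra.basis G k) (MonoidAlgebra.basis G k) P =
      (Matrix.of C)ᵀ := by
  ext i j
  simp [LinearMap.toMatrix_apply, hC, MonoidAlgebra.basis, Finsupp.single_apply]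

theorem comp_self_eq_zero_iff_mul_self_eq_zero (P : MonoidAlgebra k G →ₗ[k] MonoidAlgebra k G)
    (C : G → G → k)
    (hC : ∀ i, P (MonoidAlgebra.single i 1) = ∑ j, MonoidAlgebra.single j (C i j)) :
    P ∘ₗ P = 0 ↔ Matrix.of C * Matrix.of C = 0 := by
  let b := MonoidAlgebra.basis G k
  rw [← (LinearMap.toMatrix b b).injective.eq_iff, LinearMap.toMatrix_comp b b b, map_zero,
    toMatrix_basis_eq_transpose P C hC, ← Matrix.transpose_mul, Matrix.transpose_eq_zero]

end MatrixOfOperator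

theorem S.mul_eq_left (a b : S) : a * b = a := by
  cases a <;> cases b <;> rfl

instance : Nonempty S := ⟨e1⟩

theorem S.sum_univ {M : Type*} [AddCommMonoid M] (f : S → M) :
    ∑ i, f i = f e1 + f e2 + f e3 := by
  rw [show (Finset.univ : Finset S) = {e1, e2, e3} from rfl, Finset.sum_insert (by decide),
    Finset.sum_insert (by decide), Finset.sum_singleton, add_assoc]

theorem exists_eq_mat3 {k : Type*} (C : S → S → k) :
    ∃ x1 x2 x3 x4 x5 x6 x7 x8 x9, C = mat3 x1 x2 x3 x4 x5 x6 x7 x8 x9 :=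
  ⟨_, _, _, _, _, _, _, _, _, by funext i j; cases i <;> cases j <;> rfl⟩

theorem mat3_eq_mat3_iff {k : Type*} {a11 a12 a13 a21 a22 a23 a31 a32 a33
    b11 b12 b13 b21 b22 b23 b31 b32 b33 : k} :
    mat3 a11 a12 a13 a21 a22 a23 a31 a32 a33 = mat3 b11 b12 b13 b21 b22 b23 b31 b32 b33 ↔
      a11 = b11 ∧ a12 = b12 ∧ a13 = b13 ∧ a21 = b21 ∧ a22 = b22 ∧ a23 = b23 ∧
      a31 = b31 ∧ a32 = b32 ∧ a33 = b33 := by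
  constructor
  · intro h
    exact ⟨congrFun₂ h e1 e1, congrFun₂ h e1 e2, congrFun₂ h e1 e3, congrFun₂ h e2 e1,
      congrFun₂ h e2 e2, congrFun₂ h e2 e3, congrFun₂ h e3 e1, congrFun₂ h e3 e2, congrFun₂ h e3 e3⟩
  · rintro ⟨rfl, rfl, rfl, rfl, rfl, rfl, rfl, rfl, rfl⟩
    rfl

section Field

variable {k : Type*} [Field k] {x1 x2 x3 x4 x5 x6 x7 x8 x9 : k}

theorem mat3_mul_self_eq_zero_iff :
    Matrix.of (mat3 x1 x2 x3 x4 x5 x6 x7 x8 x9) *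
        Matrix.of (mat3 x1 x2 x3 x4 x5 x6 x7 x8 x9) = 0 ↔
      x1 * x1 + x2 * x4 + x3 * x7 = 0 ∧ x1 * x2 + x2 * x5 + x3 * x8 = 0 ∧
      x1 * x3 + x2 * x6 + x3 * x9 = 0 ∧ x4 * x1 + x5 * x4 + x6 * x7 = 0 ∧
      x4 * x2 + x5 * x5 + x6 * x8 = 0 ∧ x4 * x3 + x5 * x6 + x6 * x9 = 0 ∧
      x7 * x1 + x8 * x4 + x9 * x7 = 0 ∧ x7 * x2 + x8 * x5 + x9 * x8 = 0 ∧
      x7 * x3 + x8 * x6 + x9 * x9 = 0 := by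
  simp only [← Matrix.ext_iff, Matrix.mul_apply, S.sum_univ, Matrix.of_apply, Matrix.zero_apply]
  constructor
  · intro h
    exact ⟨h e1 e1, h e1 e2, h e1 e3, h e2 e1, h e2 e2, h e2 e3, h e3 e1, h e3 e2, h e3 e3⟩
  · rintro ⟨h11, h12, h13, h21, h22, h23, h31, h32, h33⟩ i j
    cases i <;> cases j <;> assumption

theorem mat3_minors_eq_of_mul_self_eq_zero
    (h : Matrix.of (mat3 x1 x2 x3 x4 x5 x6 x7 x8 x9) *
      Matrix.of (mat3 x1 x2 x3 x4 x5 x6 x7 x8 x9) = 0) :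
    x1 * x5 = x2 * x4 ∧ x1 * x6 = x3 * x4 ∧ x2 * x6 = x3 * x5 ∧
      x1 * x8 = x2 * x7 ∧ x1 * x9 = x3 * x7 ∧ x2 * x9 = x3 * x8 ∧
      x4 * x8 = x5 * x7 ∧ x4 * x9 = x6 * x7 ∧ x5 * x9 = x6 * x8 := by
  obtain ⟨h11, h12, h13, h21, h22, h23, h31, h32, h33⟩ := mat3_mul_self_eq_zero_iff.mp h
  refine ⟨?_, ?_, ?_, ?_, ?_, ?_, ?_, ?_, ?_⟩ <;> grind

theorem mat3_trace_eq_zero_of_mul_self_eq_zero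
    (h : Matrix.of (mat3 x1 x2 x3 x4 x5 x6 x7 x8 x9) *
      Matrix.of (mat3 x1 x2 x3 x4 x5 x6 x7 x8 x9) = 0) :
    x1 + x5 + x9 = 0 := by
  have := (Matrix.isNilpotent_trace_of_isNilpotent ⟨2, (pow_two _).trans h⟩).eq_zero
  simpa [Matrix.trace, S.sum_univ, mat3] using this

def IsNCS5Family (C : S → S → k) : Prop :=
  (∃ a b c d F : k, a ≠ 0 ∧ b ≠ 0 ∧ c ≠ 0 ∧ d ≠ 0 ∧ F ≠ 0 ∧ F ^ 2 = -(a * c + b * d) ∧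
    C = mat3 (a * c / F) (a * b / F) a (c * d / F) (b * d / F) d c b F) ∨
  (∃ b c d s : k, b ≠ 0 ∧ c ≠ 0 ∧ d ≠ 0 ∧ s ^ 2 = -(b * d) ∧
    C = mat3 0 0 0 (-(c * s) / b) (-s) d c b s) ∨
  (∃ a c d s : k, a ≠ 0 ∧ c ≠ 0 ∧ d ≠ 0 ∧ s ^ 2 = -(a * c) ∧
    C = mat3 (-s) 0 a (-(d * s) / a) 0 d c 0 s) ∨
  (∃ a b d s : k, a ≠ 0 ∧ b ≠ 0 ∧ d ≠ 0 ∧ s ^ 2 = -(b * d) ∧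
    C = mat3 0 (-(a * s) / d) a 0 (-s) d 0 b s) ∨
  (∃ a b c s : k, a ≠ 0 ∧ b ≠ 0 ∧ c ≠ 0 ∧ s ^ 2 = -(a * c) ∧
    C = mat3 (-s) (-(b * s) / c) a 0 0 0 c b s) ∨
  (∃ b d s : k, b ≠ 0 ∧ d ≠ 0 ∧ s ^ 2 = -(b * d) ∧ C = mat3 0 0 0 0 (-s) d 0 b s) ∨
  (∃ b c e : k, b ≠ 0 ∧ c ≠ 0 ∧
    C = mat3 (-(e * b) / c) (-(e * b ^ 2) / c ^ 2) 0 e (e * b / c) 0 c b 0) ∨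
  (∃ a d e : k, a ≠ 0 ∧ d ≠ 0 ∧
    C = mat3 (a * e / d) (-(a ^ 2 * e) / d ^ 2) a e (-(a * e) / d) d 0 0 0) ∨
  (∃ a c s : k, a ≠ 0 ∧ c ≠ 0 ∧ s ^ 2 = -(a * c) ∧ C = mat3 (-s) 0 a 0 0 0 c 0 s) ∨
  (∃ d e : k, d ≠ 0 ∧ C = mat3 0 0 0 e 0 d 0 0 0) ∨
  (∃ c e : k, c ≠ 0 ∧ C = mat3 0 0 0 e 0 0 c 0 0) ∨
  (∃ b e : k, b ≠ 0 ∧ C = mat3 0 e 0 0 0 0 0 b 0) ∨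
  (∃ a e : k, a ≠ 0 ∧ C = mat3 0 e a 0 0 0 0 0 0) ∨
  (∃ e f s : k, s ^ 2 = -(e * f) ∧ C = mat3 s e 0 f (-s) 0 0 0 0)

theorem isNCS5Family_of_mul_self_eq_zero
    (h : Matrix.of (mat3 x1 x2 x3 x4 x5 x6 x7 x8 x9) *
      Matrix.of (mat3 x1 x2 x3 x4 x5 x6 x7 x8 x9) = 0) :
    IsNCS5Family (mat3 x1 x2 x3 x4 x5 x6 x7 x8 x9) := by
  obtain ⟨m12, m13, m23, m14, m15, m25, m24, m34, m35⟩ := mat3_minors_eq_of_mul_self_eq_zero h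
  have htr := mat3_trace_eq_zero_of_mul_self_eq_zero h
  unfold IsNCS5Family
  simp only [mat3_eq_mat3_iff]
  rcases eq_or_ne x3 0 with ha | ha <;> rcases eq_or_ne x8 0 with hb | hb <;>
    rcases eq_or_ne x7 0 with hc | hc <;> rcases eq_or_ne x6 0 with hd | hd
  · iterate 13 right
    exact ⟨x2, x4, x1, by grind⟩
  · iterate 9 right
    left
    exact ⟨x6, x4, hd, by grind⟩
  · iterate 10 right
    left
    exact ⟨x7, x4, hc, by grind⟩
  · -- `x9 = 0` here, so the minor `x4 * x9 = x6 * x7` cannot hold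
    grind
  · iterate 11 right
    left
    exact ⟨x8, x2, hb, by grind⟩
  · iterate 5 right
    left
    exact ⟨x8, x6, x9, hb, hd, by grind⟩
  · iterate 6 right
    left
    exact ⟨x8, x7, x4, hb, hc, by grind⟩
  · right
    left
    exact ⟨x8, x7, x6, x9, hb, hc, hd, by grind⟩
  · iterate 12 right
    left
    exact ⟨x3, x2, ha, by grind⟩
  · iterate 7 right
    left
    exact ⟨x3, x6, x4, ha, hd, by grind⟩
  · iterate 8 right
    left
    exact ⟨x3, x7, x9, ha, hc, by grind⟩
  · iterate 2 right
    left
    exact ⟨x3, x7, x6, x9, ha, hc, hd, by grind⟩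
  · -- `x9 = 0` here, so the minor `x2 * x9 = x3 * x8` cannot hold
    grind
  · iterate 3 right
    left
    exact ⟨x3, x8, x6, x9, ha, hb, hd, by grind⟩
  · iterate 4 right
    left
    exact ⟨x3, x8, x7, x9, ha, hb, hc, by grind⟩
  · left
    exact ⟨x3, x8, x7, x6, x9, ha, hb, hc, hd, by grind⟩

theorem mul_self_eq_zero_of_isNCS5Family {C : S → S → k} (h : IsNCS5Family C) :
    Matrix.of C * Matrix.of C = 0 := by
  rcases h with ⟨a, b, c, d, F, ha, hb, hc, hd, hF, hF2, rfl⟩ |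
      ⟨b, c, d, s, hb, hc, hd, hs, rfl⟩ | ⟨a, c, d, s, ha, hc, hd, hs, rfl⟩ |
      ⟨a, b, d, s, ha, hb, hd, hs, rfl⟩ |
      ⟨a, b, c, s, ha, hb, hc, hs, rfl⟩ | ⟨b, d, s, hb, hd, hs, rfl⟩ | ⟨b, c, e, hb, hc, rfl⟩ |
      ⟨a, d, e, ha, hd, rfl⟩ | ⟨a, c, s, ha, hc, hs, rfl⟩ | ⟨d, e, hd, rfl⟩ | ⟨c, e, hc, rfl⟩ |
      ⟨b, e, hb, rfl⟩ | ⟨a, e, ha, rfl⟩ | ⟨e, f, s, hs, rfl⟩ <;>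
    rw [mat3_mul_self_eq_zero_iff] <;> grind

theorem mul_self_eq_zero_iff_isNCS5Family (C : S → S → k) :
    Matrix.of C * Matrix.of C = 0 ↔ IsNCS5Family C := by
  obtain ⟨x1, x2, x3, x4, x5, x6, x7, x8, x9, rfl⟩ := exists_eq_mat3 C
  exact ⟨isNCS5Family_of_mul_self_eq_zero, mul_self_eq_zero_of_isNCS5Family⟩

end Field

theorem rbo_NCS5_general {k : Type*} [Field k]
    (P : MonoidAlgebra k S →ₗ[k] MonoidAlgebra k S) (C : S → S → k)
    (hC : ∀ i, P (MonoidAlgebra.single i 1) = ∑ j, MonoidAlgebra.single j (C i j)) :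
    (∀ x y, P x * P y = P (x * P y) + P (P x * y)) ↔
      ((∃ a b c d F : k, a ≠ 0 ∧ b ≠ 0 ∧ c ≠ 0 ∧ d ≠ 0 ∧ F ≠ 0 ∧ F ^ 2 = -(a * c + b * d) ∧ C = mat3 (a * c / F) (a * b / F) a (c * d / F) (b * d / F) d c b F) ∨
      (∃ b c d s : k, b ≠ 0 ∧ c ≠ 0 ∧ d ≠ 0 ∧ s ^ 2 = -(b * d) ∧ C = mat3 0 0 0 (-(c * s) / b) (-s) d c b s) ∨
      (∃ a c d s : k, a ≠ 0 ∧ c ≠ 0 ∧ d ≠ 0 ∧ s ^ 2 = -(a * c) ∧ C = mat3 (-s) 0 a (-(d * s) / a) 0 d c 0 s) ∨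
      (∃ a b d s : k, a ≠ 0 ∧ b ≠ 0 ∧ d ≠ 0 ∧ s ^ 2 = -(b * d) ∧ C = mat3 0 (-(a * s) / d) a 0 (-s) d 0 b s) ∨
      (∃ a b c s : k, a ≠ 0 ∧ b ≠ 0 ∧ c ≠ 0 ∧ s ^ 2 = -(a * c) ∧ C = mat3 (-s) (-(b * s) / c) a 0 0 0 c b s) ∨
      (∃ b d s : k, b ≠ 0 ∧ d ≠ 0 ∧ s ^ 2 = -(b * d) ∧ C = mat3 0 0 0 0 (-s) d 0 b s) ∨
      (∃ b c e : k, b ≠ 0 ∧ c ≠ 0 ∧ C = mat3 (-(e * b) / c) (-(e * b ^ 2) / c ^ 2) 0 e (e * b / c) 0 c b 0) ∨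
      (∃ a d e : k, a ≠ 0 ∧ d ≠ 0 ∧ C = mat3 (a * e / d) (-(a ^ 2 * e) / d ^ 2) a e (-(a * e) / d) d 0 0 0) ∨
      (∃ a c s : k, a ≠ 0 ∧ c ≠ 0 ∧ s ^ 2 = -(a * c) ∧ C = mat3 (-s) 0 a 0 0 0 c 0 s) ∨
      (∃ d e : k, d ≠ 0 ∧ C = mat3 0 0 0 e 0 d 0 0 0) ∨
      (∃ c e : k, c ≠ 0 ∧ C = mat3 0 0 0 e 0 0 c 0 0) ∨
      (∃ b e : k, b ≠ 0 ∧ C = mat3 0 e 0 0 0 0 0 b 0) ∨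
      (∃ a e : k, a ≠ 0 ∧ C = mat3 0 e a 0 0 0 0 0 0) ∨
      (∃ e f s : k, s ^ 2 = -(e * f) ∧ C = mat3 s e 0 f (-s) 0 0 0 0)) := by
  rw [isRotaBaxter_iff_comp_self_eq_zero S.mul_eq_left P,
    comp_self_eq_zero_iff_mul_self_eq_zero P C hC]
  exact mul_self_eq_zero_iff_isNCS5Family C

theorem rbo_NCS5 {k : Type*} [Field k] [CharZero k]
    (P : MonoidAlgebra k S →ₗ[k] MonoidAlgebra k S) (C : S → S → k)
    (hC : ∀ i, P (MonoidAlgebra.single i 1) = ∑ j, MonoidAlgebra.single j (C i j)) :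
    (∀ x y, P x * P y = P (x * P y) + P (P x * y)) ↔
      ((∃ a b c d F : k, a ≠ 0 ∧ b ≠ 0 ∧ c ≠ 0 ∧ d ≠ 0 ∧ F ≠ 0 ∧ F ^ 2 = -(a * c + b * d) ∧ C = mat3 (a * c / F) (a * b / F) a (c * d / F) (b * d / F) d c b F) ∨
      (∃ b c d s : k, b ≠ 0 ∧ c ≠ 0 ∧ d ≠ 0 ∧ s ^ 2 = -(b * d) ∧ C = mat3 0 0 0 (-(c * s) / b) (-s) d c b s) ∨
      (∃ a c d s : k, a ≠ 0 ∧ c ≠ 0 ∧ d ≠ 0 ∧ s ^ 2 = -(a * c) ∧ C = mat3 (-s) 0 a (-(d * s) / a) 0 d c 0 s) ∨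
      (∃ a b d s : k, a ≠ 0 ∧ b ≠ 0 ∧ d ≠ 0 ∧ s ^ 2 = -(b * d) ∧ C = mat3 0 (-(a * s) / d) a 0 (-s) d 0 b s) ∨
      (∃ a b c s : k, a ≠ 0 ∧ b ≠ 0 ∧ c ≠ 0 ∧ s ^ 2 = -(a * c) ∧ C = mat3 (-s) (-(b * s) / c) a 0 0 0 c b s) ∨
      (∃ b d s : k, b ≠ 0 ∧ d ≠ 0 ∧ s ^ 2 = -(b * d) ∧ C = mat3 0 0 0 0 (-s) d 0 b s) ∨
      (∃ b c e : k, b ≠ 0 ∧ c ≠ 0 ∧ C = mat3 (-(e * b) / c) (-(e * b ^ 2) / c ^ 2) 0 e (e * b / c) 0 c b 0) ∨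
      (∃ a d e : k, a ≠ 0 ∧ d ≠ 0 ∧ C = mat3 (a * e / d) (-(a ^ 2 * e) / d ^ 2) a e (-(a * e) / d) d 0 0 0) ∨
      (∃ a c s : k, a ≠ 0 ∧ c ≠ 0 ∧ s ^ 2 = -(a * c) ∧ C = mat3 (-s) 0 a 0 0 0 c 0 s) ∨
      (∃ d e : k, d ≠ 0 ∧ C = mat3 0 0 0 e 0 d 0 0 0) ∨
      (∃ c e : k, c ≠ 0 ∧ C = mat3 0 0 0 e 0 0 c 0 0) ∨
      (∃ b e : k, b ≠ 0 ∧ C = mat3 0 e 0 0 0 0 0 b 0) ∨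
      (∃ a e : k, a ≠ 0 ∧ C = mat3 0 e a 0 0 0 0 0 0) ∨
      (∃ e f s : k, s ^ 2 = -(e * f) ∧ C = mat3 s e 0 f (-s) 0 0 0 0)) :=
  rbo_NCS5_general P C hC

end Stmt18
end
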